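/- arXiv:2512.13315 — 5 statements merged into one kernel-verified Lean document; each statement's English description precedes it below -/
import Mathlib

section
/- Let M and N be metric spaces, and assume that for all x, x' ∈ M and every θ > 0 there exists a continuous path in M from x to x' of length at most d_M(x,x') + θ. Let n ≥ 1, let W_1, …, W_n be open subsets of M with M = W_1 ∪ … ∪ W_n, let δ > 0, and for each i let F_i : W_i → N be a map such that: (i) for all i, j and every x ∈ W_i ∩ W_j one has d_N(F_i(x), F_j(x)) < δ; and (ii) for all i and all x, x' ∈ W_i one has d_N(F_i(x), F_i(x')) < d_M(x,x') + δ. Then for all i, j, every x ∈ W_i and every x' ∈ W_j, one has d_N(F_i(x), F_j(x')) < d_M(x,x') + (2n+1)δ. -/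
/-- The length of a (continuous) path `γ : ℝ → X` parametrized on `[0,1]`,
defined as its total variation on `[0,1]`. -/
noncomputable def pathLength {X : Type*} [PseudoMetricSpace X] (γ : ℝ → X) : ENNReal :=
  eVariationOn γ (Set.Icc 0 1)

open Classical in
/-- Auxiliary: the set of charts `m ≠ k` whose "exit time" from `a` is at least that of `k`. -/
noncomputable def glueAvail {M : Type*} [MetricSpace M] {n : ℕ} (W : Fin n → Set M)
    (γ : ℝ → M) (a : ℝ) (k : Fin n) : Finset (Fin n) :=
  Finset.univ.filter fun m => m ≠ k ∧
    sSup {t | t ∈ Set.Icc a 1 ∧ γ t ∈ W k} ≤ sSup {t | t ∈ Set.Icc a 1 ∧ γ t ∈ W m}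

lemma glue_var_add {M : Type*} [MetricSpace M] (γ : ℝ → M)
    (hfin : eVariationOn γ (Set.Icc 0 1) ≠ ⊤) {a u : ℝ}
    (h0 : 0 ≤ a) (hau : a ≤ u) (hu1 : u ≤ 1) :
    dist (γ a) (γ u) + (eVariationOn γ (Set.Icc u 1)).toReal
      ≤ (eVariationOn γ (Set.Icc a 1)).toReal := by
  have hfa : eVariationOn γ (Set.Icc a 1) ≠ ⊤ :=
    ne_top_of_le_ne_top hfin (eVariationOn.mono γ (Set.Icc_subset_Icc h0 le_rfl))
  have key : eVariationOn γ (Set.Icc a u) + eVariationOn γ (Set.Icc u 1)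
      = eVariationOn γ (Set.Icc a 1) := by
    have h := eVariationOn.Icc_add_Icc γ (s := Set.Icc a 1) hau hu1 ⟨hau, hu1⟩
    simp only [Set.Icc_inter_Icc, max_self, min_self, min_eq_right hu1,
      max_eq_right hau] at h
    exact h
  have hfau : eVariationOn γ (Set.Icc a u) ≠ ⊤ :=
    ne_top_of_le_ne_top hfa (key ▸ le_self_add)
  have hfu1 : eVariationOn γ (Set.Icc u 1) ≠ ⊤ :=
    ne_top_of_le_ne_top hfa (key ▸ le_add_self)
  have hd : dist (γ a) (γ u) ≤ (eVariationOn γ (Set.Icc a u)).toReal :=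
    BoundedVariationOn.dist_le hfau ⟨le_rfl, hau⟩ ⟨hau, le_rfl⟩
  have := congrArg ENNReal.toReal key
  rw [ENNReal.toReal_add hfau hfu1] at this
  linarith

lemma glue_key {M N : Type*} [MetricSpace M] [MetricSpace N]
    {n : ℕ} (W : Fin n → Set M) (hWopen : ∀ i, IsOpen (W i))
    (hWcover : (⋃ i, W i) = Set.univ)
    {δ : ℝ} (hδ : 0 < δ) (F : Fin n → M → N)
    (h1 : ∀ i j, ∀ x ∈ W i ∩ W j, dist (F i x) (F j x) < δ)
    (h2 : ∀ i, ∀ x ∈ W i, ∀ x' ∈ W i, dist (F i x) (F i x') < dist x x' + δ)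
    (γ : ℝ → M) (hγc : ContinuousOn γ (Set.Icc 0 1))
    (hfin : eVariationOn γ (Set.Icc 0 1) ≠ ⊤)
    (j : Fin n) (hj : γ 1 ∈ W j) :
    ∀ c : ℕ, ∀ a : ℝ, a ∈ Set.Icc (0:ℝ) 1 → ∀ k : Fin n, γ a ∈ W k →
      (glueAvail W γ a k).card ≤ c →
      dist (F k (γ a)) (F j (γ 1)) <
        (eVariationOn γ (Set.Icc a 1)).toReal + (2 * c + 2) * δ := by
  intro c
  induction c using Nat.strong_induction_on with
  | _ c IH =>
  intro a ha k hk hcard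
  classical
  set Tk : Set ℝ := {t | t ∈ Set.Icc a 1 ∧ γ t ∈ W k} with hTk
  have haT : a ∈ Tk := ⟨⟨le_rfl, ha.2⟩, hk⟩
  have hbdd : ∀ (m : Fin n) (b : ℝ), BddAbove {t | t ∈ Set.Icc b 1 ∧ γ t ∈ W m} :=
    fun m b => ⟨1, fun t ht => ht.1.2⟩
  set s : ℝ := sSup Tk with hs
  have has : a ≤ s := le_csSup (hbdd k a) haT
  have hs1 : s ≤ 1 := csSup_le ⟨a, haT⟩ (fun t ht => ht.1.2)
  have hsIcc : s ∈ Set.Icc (0:ℝ) 1 := ⟨ha.1.trans has, hs1⟩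
  have hVa : eVariationOn γ (Set.Icc a 1) ≠ ⊤ :=
    ne_top_of_le_ne_top hfin (eVariationOn.mono γ (Set.Icc_subset_Icc ha.1 le_rfl))
  -- neighborhood extraction
  have hnbhd : ∀ (U : Set M), IsOpen U → γ s ∈ U →
      ∃ ε > 0, ∀ t ∈ Set.Icc (0:ℝ) 1, |t - s| < ε → γ t ∈ U := by
    intro U hU hsU
    have h1' : γ ⁻¹' U ∈ nhdsWithin s (Set.Icc (0:ℝ) 1) :=
      hγc s hsIcc (hU.mem_nhds hsU)
    rcases Metric.mem_nhdsWithin_iff.1 h1' with ⟨ε, hε, hball⟩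
    refine ⟨ε, hε, fun t ht hts => hball ⟨?_, ht⟩⟩
    simpa [Metric.mem_ball, Real.dist_eq] using hts
  -- nearby point below the sup
  have hnear : ∀ ε > (0:ℝ), ∃ u ∈ Tk, s - ε < u :=
    fun ε hε => exists_lt_of_lt_csSup ⟨a, haT⟩ (by linarith)
  by_cases hks : γ s ∈ W k
  · -- then s = 1 and we conclude directly
    have hs1' : s = 1 := by
      by_contra hne
      have hslt : s < 1 := lt_of_le_of_ne hs1 hne
      rcases hnbhd (W k) (hWopen k) hks with ⟨ε, hε, hball⟩
      set t := min (s + ε / 2) 1 with htdef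
      have hst : s < t := lt_min (by linarith) hslt
      have htIcc : t ∈ Set.Icc (0:ℝ) 1 :=
        ⟨le_min (by linarith [hsIcc.1]) zero_le_one, min_le_right _ _⟩
      have htW : γ t ∈ W k := by
        apply hball t htIcc
        rw [abs_lt]
        constructor
        · linarith
        · have : t ≤ s + ε / 2 := min_le_left _ _
          linarith
      have htT : t ∈ Tk := ⟨⟨has.trans hst.le, htIcc.2⟩, htW⟩
      exact absurd (le_csSup (hbdd k a) htT) (not_le.2 hst)
    have hk1 : γ 1 ∈ W k := hs1' ▸ hks
    have hd1 : dist (F k (γ a)) (F k (γ 1)) < dist (γ a) (γ 1) + δ :=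
      h2 k (γ a) hk (γ 1) hk1
    have hd2 : dist (F k (γ 1)) (F j (γ 1)) < δ := h1 k j (γ 1) ⟨hk1, hj⟩
    have htri := dist_triangle (F k (γ a)) (F k (γ 1)) (F j (γ 1))
    have hdv : dist (γ a) (γ 1) ≤ (eVariationOn γ (Set.Icc a 1)).toReal :=
      BoundedVariationOn.dist_le hVa ⟨le_rfl, ha.2⟩ ⟨ha.2, le_rfl⟩
    have hc0 : (0:ℝ) ≤ (c:ℝ) := Nat.cast_nonneg c
    nlinarith
  · by_cases hs1' : s = 1
    · -- terminal case with chart change to j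
      have hjk : j ≠ k := by
        intro h
        rw [h] at hj
        exact hks (hs1' ▸ hj)
      rcases hnbhd (W j) (hWopen j) (by rw [hs1']; exact hj) with ⟨ε, hε, hball⟩
      rcases hnear ε hε with ⟨u, huT, hu⟩
      have hus : u ≤ s := le_csSup (hbdd k a) huT
      have huIcc : u ∈ Set.Icc (0:ℝ) 1 := ⟨ha.1.trans huT.1.1, huT.1.2⟩
      have huj : γ u ∈ W j := hball u huIcc (by rw [abs_lt]; constructor <;> linarith)
      -- c ≥ 1 because j is available
      have hjmem : j ∈ glueAvail W γ a k := by
        rw [glueAvail, Finset.mem_filter]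
        refine ⟨Finset.mem_univ _, hjk, ?_⟩
        have h1T : (1:ℝ) ∈ {t | t ∈ Set.Icc a 1 ∧ γ t ∈ W j} := ⟨⟨ha.2, le_rfl⟩, hj⟩
        calc sSup Tk = s := rfl
          _ = 1 := hs1'
          _ ≤ sSup {t | t ∈ Set.Icc a 1 ∧ γ t ∈ W j} := le_csSup (hbdd j a) h1T
      have hc1 : 1 ≤ c := le_trans (Finset.card_pos.2 ⟨j, hjmem⟩) hcard
      -- estimates
      have hd1 : dist (F k (γ a)) (F k (γ u)) < dist (γ a) (γ u) + δ :=
        h2 k (γ a) hk (γ u) huT.2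
      have hd2 : dist (F k (γ u)) (F j (γ u)) < δ := h1 k j (γ u) ⟨huT.2, huj⟩
      have hd3 : dist (F j (γ u)) (F j (γ 1)) < dist (γ u) (γ 1) + δ :=
        h2 j (γ u) huj (γ 1) hj
      have htri := dist_triangle4 (F k (γ a)) (F k (γ u)) (F j (γ u)) (F j (γ 1))
      have hVu : eVariationOn γ (Set.Icc u 1) ≠ ⊤ :=
        ne_top_of_le_ne_top hfin (eVariationOn.mono γ (Set.Icc_subset_Icc huIcc.1 le_rfl))
      have hdu1 : dist (γ u) (γ 1) ≤ (eVariationOn γ (Set.Icc u 1)).toReal :=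
        BoundedVariationOn.dist_le hVu ⟨le_rfl, huIcc.2⟩ ⟨huIcc.2, le_rfl⟩
      have hadd := glue_var_add γ hfin ha.1 huT.1.1 huIcc.2
      have hcc : (1:ℝ) ≤ (c:ℝ) := by exact_mod_cast hc1
      nlinarith
    · -- recursive case
      have hslt : s < 1 := lt_of_le_of_ne hs1 hs1'
      have : γ s ∈ ⋃ i, W i := by rw [hWcover]; trivial
      rcases Set.mem_iUnion.1 this with ⟨m, hm⟩
      have hmk : m ≠ k := fun h => hks (h ▸ hm)
      rcases hnbhd (W m) (hWopen m) hm with ⟨ε, hε, hball⟩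
      rcases hnear ε hε with ⟨u, huT, hu⟩
      have hus : u ≤ s := le_csSup (hbdd k a) huT
      have huIcc : u ∈ Set.Icc (0:ℝ) 1 := ⟨ha.1.trans huT.1.1, huT.1.2⟩
      have hum : γ u ∈ W m := hball u huIcc (by rw [abs_lt]; constructor <;> linarith)
      -- a point beyond s in W m
      set t' := min (s + ε / 2) 1 with ht'def
      have hst' : s < t' := lt_min (by linarith) hslt
      have ht'Icc : t' ∈ Set.Icc (0:ℝ) 1 :=
        ⟨le_min (by linarith [hsIcc.1]) zero_le_one, min_le_right _ _⟩
      have ht'W : γ t' ∈ W m := by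
        apply hball t' ht'Icc
        rw [abs_lt]
        constructor
        · linarith
        · have : t' ≤ s + ε / 2 := min_le_left _ _
          linarith
      have ht'T : t' ∈ {t | t ∈ Set.Icc u 1 ∧ γ t ∈ W m} :=
        ⟨⟨hus.trans hst'.le, ht'Icc.2⟩, ht'W⟩
      have hsm : s < sSup {t | t ∈ Set.Icc u 1 ∧ γ t ∈ W m} :=
        lt_of_lt_of_le hst' (le_csSup (hbdd m u) ht'T)
      -- k's sup from u is at most s
      have hkk : sSup {t | t ∈ Set.Icc u 1 ∧ γ t ∈ W k} ≤ s := by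
        have hune : u ∈ {t | t ∈ Set.Icc u 1 ∧ γ t ∈ W k} := ⟨⟨le_rfl, huIcc.2⟩, huT.2⟩
        apply csSup_le ⟨u, hune⟩
        intro t ht
        exact le_csSup (hbdd k a) ⟨⟨huT.1.1.trans ht.1.1, ht.1.2⟩, ht.2⟩
      -- availability decreases
      have hmavail : m ∈ glueAvail W γ a k := by
        rw [glueAvail, Finset.mem_filter]
        exact ⟨Finset.mem_univ _, hmk,
          le_csSup (hbdd m a) ⟨⟨has, hs1⟩, hm⟩⟩
      have hsub : glueAvail W γ u m ⊆ (glueAvail W γ a k).erase m := by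
        intro mm hmm
        rw [glueAvail, Finset.mem_filter] at hmm
        obtain ⟨-, hne, hle⟩ := hmm
        have hmm_ne : {t | t ∈ Set.Icc u 1 ∧ γ t ∈ W mm}.Nonempty := by
          by_contra hemp
          rw [Set.not_nonempty_iff_eq_empty] at hemp
          rw [hemp, Real.sSup_empty] at hle
          have h0s : (0:ℝ) ≤ s := hsIcc.1
          linarith [lt_of_lt_of_le hsm hle]
        have hsup_mono : sSup {t | t ∈ Set.Icc u 1 ∧ γ t ∈ W mm}
            ≤ sSup {t | t ∈ Set.Icc a 1 ∧ γ t ∈ W mm} := by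
          apply csSup_le_csSup (hbdd mm a) hmm_ne
          intro t ht
          exact ⟨⟨huT.1.1.trans ht.1.1, ht.1.2⟩, ht.2⟩
        have hsmm : s < sSup {t | t ∈ Set.Icc a 1 ∧ γ t ∈ W mm} :=
          lt_of_lt_of_le (lt_of_lt_of_le hsm hle) hsup_mono
        have hmmk : mm ≠ k := by
          intro h
          rw [h] at hle
          linarith [lt_of_lt_of_le hsm hle, hkk]
        rw [Finset.mem_erase, glueAvail, Finset.mem_filter]
        exact ⟨hne, Finset.mem_univ _, hmmk, hsmm.le⟩
      have hc1 : 1 ≤ c := le_trans (Finset.card_pos.2 ⟨m, hmavail⟩) hcard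
      have hcard' : (glueAvail W γ u m).card ≤ c - 1 := by
        have h1' := Finset.card_le_card hsub
        rw [Finset.card_erase_of_mem hmavail] at h1'
        omega
      have hrec := IH (c - 1) (by omega) u huIcc m hum hcard'
      -- estimates
      have hd1 : dist (F k (γ a)) (F k (γ u)) < dist (γ a) (γ u) + δ :=
        h2 k (γ a) hk (γ u) huT.2
      have hd2 : dist (F k (γ u)) (F m (γ u)) < δ := h1 k m (γ u) ⟨huT.2, hum⟩
      have htri := dist_triangle4 (F k (γ a)) (F k (γ u)) (F m (γ u)) (F j (γ 1))
      have hadd := glue_var_add γ hfin ha.1 huT.1.1 huIcc.2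
      have hcc : (1:ℝ) ≤ (c:ℝ) := by exact_mod_cast hc1
      have hcast : ((c - 1 : ℕ) : ℝ) = (c:ℝ) - 1 := by
        rw [Nat.cast_sub hc1]; norm_num
      rw [hcast] at hrec
      nlinarith

/-- **Gluing lemma.** Let `M`, `N` be metric spaces such that any two points of `M` can be
joined, for every `θ > 0`, by a continuous path of length at most `d_M(x,x') + θ`.
Let `W_1, …, W_n` be open sets covering `M`, `δ > 0`, and `F_i : W_i → N` maps such that
(i) `d_N(F_i x, F_j x) < δ` on overlaps, and
(ii) `d_N(F_i x, F_i x') < d_M(x,x') + δ` on each `W_i`.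
Then `d_N(F_i x, F_j x') < d_M(x,x') + (2n+1)δ` for all `x ∈ W_i`, `x' ∈ W_j`. -/
theorem gluing_lemma
    {M N : Type*} [MetricSpace M] [MetricSpace N]
    (hpath : ∀ x x' : M, ∀ θ : ℝ, 0 < θ →
      ∃ γ : ℝ → M, ContinuousOn γ (Set.Icc 0 1) ∧ γ 0 = x ∧ γ 1 = x' ∧
        pathLength γ ≤ ENNReal.ofReal (dist x x' + θ))
    (n : ℕ) (hn : 1 ≤ n)
    (W : Fin n → Set M) (hWopen : ∀ i, IsOpen (W i))
    (hWcover : (⋃ i, W i) = Set.univ)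
    (δ : ℝ) (hδ : 0 < δ)
    (F : Fin n → M → N)
    (h1 : ∀ i j, ∀ x ∈ W i ∩ W j, dist (F i x) (F j x) < δ)
    (h2 : ∀ i, ∀ x ∈ W i, ∀ x' ∈ W i, dist (F i x) (F i x') < dist x x' + δ) :
    ∀ i j, ∀ x ∈ W i, ∀ x' ∈ W j,
      dist (F i x) (F j x') < dist x x' + (2 * n + 1) * δ := by
  intro i j x hx x' hx'
  obtain ⟨γ, hγc, hγ0, hγ1, hlen⟩ := hpath x x' (δ / 2) (by positivity)
  rw [pathLength] at hlen
  have hfin : eVariationOn γ (Set.Icc 0 1) ≠ ⊤ :=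
    ne_top_of_le_ne_top ENNReal.ofReal_ne_top hlen
  have hcard : (glueAvail W γ 0 i).card ≤ n - 1 := by
    classical
    have hsub : glueAvail W γ 0 i ⊆ Finset.univ.erase i := by
      intro m hm
      rw [glueAvail, Finset.mem_filter] at hm
      exact Finset.mem_erase.2 ⟨hm.2.1, Finset.mem_univ _⟩
    calc (glueAvail W γ 0 i).card ≤ (Finset.univ.erase i).card := Finset.card_le_card hsub
      _ = n - 1 := by rw [Finset.card_erase_of_mem (Finset.mem_univ _)]; simp
  have hkey := glue_key W hWopen hWcover hδ F h1 h2 γ hγc hfin j (hγ1 ▸ hx')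
    (n - 1) 0 ⟨le_rfl, zero_le_one⟩ i (hγ0 ▸ hx) hcard
  rw [hγ0, hγ1] at hkey
  have hVle : (eVariationOn γ (Set.Icc 0 1)).toReal ≤ dist x x' + δ / 2 :=
    ENNReal.toReal_le_of_le_ofReal (by positivity) hlen
  have hcast : ((n - 1 : ℕ) : ℝ) = (n:ℝ) - 1 := by
    rw [Nat.cast_sub hn]; norm_num
  rw [hcast] at hkey
  have hn1 : (1:ℝ) ≤ (n:ℝ) := by exact_mod_cast hn
  nlinarith
end

section
/- Let X be a metric space, n ≥ 1, and let B_1, …, B_n be pairwise disjoint open subsets of X; set R = X ∖ (B_1 ∪ … ∪ B_n). Let δ > 0 and let x, y ∈ R. Assume: (a) there exists a continuous path γ : [0,1] → X with γ(0) = x, γ(1) = y whose length is at most d(x,y) + δ; and (b) for each i, any two points of the frontier ∂B_i can be joined by a continuous path taking values in R of length at most δ. Then x and y can be joined by a continuous path taking values in R of length at most d(x,y) + (n+1)δ. -/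
/-!
Remove the sets `B i` from the path one at a time. If a path in `[0, 1]` with endpoints outside an
open set `U` meets `U`, let `a` and `b` be the infimum and supremum of the times it spends in `U`.
Then `γ a` and `γ b` lie on the frontier of `U` and the path avoids `U` outside `[a, b]`, so
replacing `γ` on `[a, b]` by a path in `R` from `γ a` to `γ b` of length at most `δ` gives a path
that avoids `U`, meets no set that `γ` did not meet, and is at most `δ` longer. After the `n` steps
the path lies in `R` and has length at most `d(x, y) + δ + n δ`.
-/

open Set Filter Topology
open scoped ENNReal

theorem eVariationOn.Icc_add_Icc_add_Icc {α E : Type*} [LinearOrder α] [PseudoEMetricSpace E]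
    (f : α → E) {u a b v : α} (hua : u ≤ a) (hab : a ≤ b) (hbv : b ≤ v) :
    eVariationOn f (Icc u a) + eVariationOn f (Icc a b) + eVariationOn f (Icc b v) =
      eVariationOn f (Icc u v) := by
  have hub := eVariationOn.Icc_add_Icc f (s := univ) hua hab (mem_univ a)
  have huv := eVariationOn.Icc_add_Icc f (s := univ) (hua.trans hab) hbv (mem_univ b)
  simp only [univ_inter] at hub huv
  rw [hub, huv]

section FrontierTimes

variable {α X : Type*} [ConditionallyCompleteLinearOrder α] [TopologicalSpace α] [OrderTopology α]
  [DenselyOrdered α] [TopologicalSpace X] {f : α → X} {U : Set X} {u v : α}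

theorem ContinuousOn.map_sInf_inter_preimage_mem_frontier (hf : ContinuousOn f (Icc u v))
    (hU : IsOpen U) (hu : f u ∉ U) (hA : (Icc u v ∩ f ⁻¹' U).Nonempty) :
    f (sInf (Icc u v ∩ f ⁻¹' U)) ∈ frontier U := by
  set A := Icc u v ∩ f ⁻¹' U
  have hbdd : BddBelow A := bddBelow_Icc.mono inter_subset_left
  have hcl : sInf A ∈ closure A := csInf_mem_closure hA hbdd
  have hI : sInf A ∈ Icc u v := isClosed_Icc.closure_subset_iff.2 inter_subset_left hcl
  rw [hU.frontier_eq]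
  refine ⟨((hf _ hI).mono inter_subset_left).mem_closure hcl fun t ht => ht.2, fun hfU => ?_⟩
  obtain hu_eq | hu_lt := hI.1.eq_or_lt
  · exact hu (hu_eq ▸ hfU)
  -- by continuity `f` is already in `U` at times just below `sInf A`
  have := nhdsLT_neBot_of_exists_lt ⟨u, hu_lt⟩
  have hIcc : ∀ᶠ t in 𝓝[<] sInf A, t ∈ Icc u v :=
    mem_of_superset (Icc_mem_nhdsLT hu_lt) (Icc_subset_Icc_right hI.2)
  have hfU : ∀ᶠ t in 𝓝[<] sInf A, f t ∈ U :=
    ((hf _ hI).mono_of_mem_nhdsWithin hIcc).eventually_mem (hU.mem_nhds hfU)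
  obtain ⟨t, ⟨htI, htU⟩, hlt⟩ := ((hIcc.and hfU).and self_mem_nhdsWithin).exists
  exact (csInf_le hbdd ⟨htI, htU⟩).not_gt hlt

theorem ContinuousOn.map_sSup_inter_preimage_mem_frontier (hf : ContinuousOn f (Icc u v))
    (hU : IsOpen U) (hv : f v ∉ U) (hA : (Icc u v ∩ f ⁻¹' U).Nonempty) :
    f (sSup (Icc u v ∩ f ⁻¹' U)) ∈ frontier U := by
  have key := ContinuousOn.map_sInf_inter_preimage_mem_frontier (α := αᵒᵈ) (f := f) (U := U)
    (u := OrderDual.toDual v) (v := OrderDual.toDual u)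
  rw [Icc_toDual] at key
  exact key hf hU hv hA

theorem ContinuousOn.exists_entry_exit_frontier (hf : ContinuousOn f (Icc u v)) (hU : IsOpen U)
    (hu : f u ∉ U) (hv : f v ∉ U) (hmeet : ∃ t ∈ Icc u v, f t ∈ U) :
    ∃ a b, u ≤ a ∧ a < b ∧ b ≤ v ∧ f a ∈ frontier U ∧ f b ∈ frontier U ∧
      MapsTo f (Icc u v \ Icc a b) Uᶜ := by
  set A := Icc u v ∩ f ⁻¹' U
  obtain ⟨t₀, ht₀⟩ : A.Nonempty := hmeet
  have hbdd : BddBelow A := bddBelow_Icc.mono inter_subset_left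
  have hbdd' : BddAbove A := bddAbove_Icc.mono inter_subset_left
  have ha := hf.map_sInf_inter_preimage_mem_frontier hU hu ⟨t₀, ht₀⟩
  have hb := hf.map_sSup_inter_preimage_mem_frontier hU hv ⟨t₀, ht₀⟩
  have ha_lt : sInf A < t₀ := (csInf_le hbdd ht₀).lt_of_ne fun h =>
    (hU.frontier_eq ▸ ha).2 (h ▸ ht₀.2)
  refine ⟨sInf A, sSup A, le_csInf ⟨t₀, ht₀⟩ fun t ht => ht.1.1,
    ha_lt.trans_le (le_csSup hbdd' ht₀), csSup_le ⟨t₀, ht₀⟩ fun t ht => ht.1.2, ha, hb,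
    fun t ht htU => ht.2 ⟨csInf_le hbdd ⟨ht.1, htU⟩, le_csSup hbdd' ⟨ht.1, htU⟩⟩⟩

end FrontierTimes

section Splice

variable {X : Type*} {γ η : ℝ → X} {a b u v : ℝ}

noncomputable def spliceIcc (γ η : ℝ → X) (a b t : ℝ) : X :=
  if t ∈ Icc a b then η ((t - a) / (b - a)) else γ t

theorem mapsTo_div_sub_Icc : MapsTo (fun t => (t - a) / (b - a)) (Icc a b) (Icc 0 1) :=
  fun _ ht => ⟨div_nonneg (sub_nonneg.2 ht.1) (sub_nonneg.2 (ht.1.trans ht.2)),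
    div_le_one_of_le₀ (sub_le_sub_right ht.2 a) (sub_nonneg.2 (ht.1.trans ht.2))⟩

theorem eqOn_spliceIcc_Iic (hη0 : η 0 = γ a) : EqOn (spliceIcc γ η a b) γ (Iic a) := by
  intro t ht
  by_cases htab : t ∈ Icc a b
  · rw [spliceIcc, if_pos htab, le_antisymm ht htab.1, sub_self, zero_div, hη0]
  · exact if_neg htab

theorem eqOn_spliceIcc_Ici (hab : a < b) (hη1 : η 1 = γ b) :
    EqOn (spliceIcc γ η a b) γ (Ici b) := by
  intro t ht
  by_cases htab : t ∈ Icc a b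
  · rw [spliceIcc, if_pos htab, le_antisymm htab.2 ht, div_self (sub_pos.2 hab).ne', hη1]
  · exact if_neg htab

theorem eqOn_spliceIcc_Icc :
    EqOn (spliceIcc γ η a b) (η ∘ fun t => (t - a) / (b - a)) (Icc a b) :=
  fun _ ht => if_pos ht

theorem mapsTo_spliceIcc {I : Set ℝ} {s : Set X} (hγ : MapsTo γ (I \ Icc a b) s)
    (hη : MapsTo η (Icc 0 1) s) : MapsTo (spliceIcc γ η a b) I s := by
  intro t ht
  by_cases htab : t ∈ Icc a b
  · rw [eqOn_spliceIcc_Icc htab]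
    exact hη (mapsTo_div_sub_Icc htab)
  · rw [spliceIcc, if_neg htab]
    exact hγ ⟨ht, htab⟩

theorem Icc_eq_Icc_union_Icc_union_Icc (hua : u ≤ a) (hab : a ≤ b) (hbv : b ≤ v) :
    Icc u v = Icc u a ∪ Icc a b ∪ Icc b v := by
  rw [Icc_union_Icc_eq_Icc hua hab, Icc_union_Icc_eq_Icc (hua.trans hab) hbv]

theorem continuousOn_spliceIcc [TopologicalSpace X] (hγ : ContinuousOn γ (Icc u v))
    (hη : ContinuousOn η (Icc 0 1)) (hη0 : η 0 = γ a) (hη1 : η 1 = γ b) (hua : u ≤ a)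
    (hab : a < b) (hbv : b ≤ v) : ContinuousOn (spliceIcc γ η a b) (Icc u v) := by
  have hφ : Continuous fun t : ℝ => (t - a) / (b - a) := by fun_prop
  rw [Icc_eq_Icc_union_Icc_union_Icc hua hab.le hbv]
  refine .union_of_isClosed (.union_of_isClosed ?_ ?_ isClosed_Icc isClosed_Icc) ?_
    (isClosed_Icc.union isClosed_Icc) isClosed_Icc
  · exact (hγ.mono (Icc_subset_Icc_right (hab.le.trans hbv))).congr
      ((eqOn_spliceIcc_Iic hη0).mono Icc_subset_Iic_self)
  · exact (hη.comp hφ.continuousOn mapsTo_div_sub_Icc).congr eqOn_spliceIcc_Icc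
  · exact (hγ.mono (Icc_subset_Icc_left (hua.trans hab.le))).congr
      ((eqOn_spliceIcc_Ici hab hη1).mono Icc_subset_Ici_self)

theorem eVariationOn_spliceIcc_le [PseudoEMetricSpace X] (hη0 : η 0 = γ a) (hη1 : η 1 = γ b)
    (hua : u ≤ a) (hab : a < b) (hbv : b ≤ v) :
    eVariationOn (spliceIcc γ η a b) (Icc u v) ≤
      eVariationOn γ (Icc u v) + eVariationOn η (Icc 0 1) := by
  have hφ : MonotoneOn (fun t : ℝ => (t - a) / (b - a)) (Icc a b) := fun s _ t _ hst =>
    div_le_div_of_nonneg_right (sub_le_sub_right hst a) (sub_pos.2 hab).le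
  rw [← eVariationOn.Icc_add_Icc_add_Icc _ hua hab.le hbv,
    ← eVariationOn.Icc_add_Icc_add_Icc γ hua hab.le hbv,
    eVariationOn.eq_of_eqOn ((eqOn_spliceIcc_Iic hη0).mono Icc_subset_Iic_self),
    eVariationOn.eq_of_eqOn eqOn_spliceIcc_Icc,
    eVariationOn.eq_of_eqOn ((eqOn_spliceIcc_Ici hab hη1).mono Icc_subset_Ici_self)]
  have hη := eVariationOn.comp_le_of_monotoneOn η _ hφ mapsTo_div_sub_Icc
  calc _ ≤ eVariationOn γ (Icc u a) + eVariationOn η (Icc 0 1) + eVariationOn γ (Icc b v) := by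
        gcongr
    _ ≤ _ := by
        rw [add_right_comm _ (eVariationOn η _)]
        gcongr
        exact le_self_add

end Splice

section Reroute

variable {X : Type*} [PseudoMetricSpace X] {γ : ℝ → X} {U s : Set X} {ε : ℝ≥0∞}

theorem ContinuousOn.exists_reroute_around (hγ : ContinuousOn γ (Icc 0 1)) (hU : IsOpen U)
    (h0 : γ 0 ∉ U) (h1 : γ 1 ∉ U)
    (hfr : ∀ p ∈ frontier U, ∀ q ∈ frontier U,
      ∃ η : ℝ → X, ContinuousOn η (Icc 0 1) ∧ η 0 = p ∧ η 1 = q ∧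
        (∀ t ∈ Icc (0 : ℝ) 1, η t ∈ s) ∧ pathLength η ≤ ε) :
    ∃ γ' : ℝ → X, ContinuousOn γ' (Icc 0 1) ∧ γ' 0 = γ 0 ∧ γ' 1 = γ 1 ∧
      MapsTo γ' (Icc 0 1) (s ∪ γ '' Icc 0 1 \ U) ∧ pathLength γ' ≤ pathLength γ + ε := by
  by_cases hmeet : ∃ t ∈ Icc (0 : ℝ) 1, γ t ∈ U
  · obtain ⟨a, b, h0a, hab, hb1, ha, hb, hout⟩ := hγ.exists_entry_exit_frontier hU h0 h1 hmeet
    obtain ⟨η, hη, hη0, hη1, hηs, hηlen⟩ := hfr _ ha _ hb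
    refine ⟨spliceIcc γ η a b, continuousOn_spliceIcc hγ hη hη0 hη1 h0a hab hb1,
      eqOn_spliceIcc_Iic hη0 (show (0 : ℝ) ≤ a from h0a),
      eqOn_spliceIcc_Ici hab hη1 (show b ≤ (1 : ℝ) from hb1),
      mapsTo_spliceIcc (fun t ht => Or.inr ⟨⟨t, ht.1, rfl⟩, hout ht⟩)
        fun t ht => Or.inl (hηs t ht),
      (eVariationOn_spliceIcc_le hη0 hη1 h0a hab hb1).trans (add_le_add_right hηlen _)⟩
  · push Not at hmeet
    exact ⟨γ, hγ, rfl, rfl, fun t ht => Or.inr ⟨⟨t, ht, rfl⟩, hmeet t ht⟩, le_self_add⟩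

theorem ContinuousOn.exists_path_avoiding_iUnion {ι : Type*} {B : ι → Set X}
    (hB : ∀ i, IsOpen (B i))
    (hfr : ∀ i, ∀ p ∈ frontier (B i), ∀ q ∈ frontier (B i),
      ∃ η : ℝ → X, ContinuousOn η (Icc 0 1) ∧ η 0 = p ∧ η 1 = q ∧
        (∀ t ∈ Icc (0 : ℝ) 1, η t ∈ (⋃ i, B i)ᶜ) ∧ pathLength η ≤ ε)
    (S : Finset ι) (hγ : ContinuousOn γ (Icc 0 1)) (h0 : γ 0 ∈ (⋃ i, B i)ᶜ)
    (h1 : γ 1 ∈ (⋃ i, B i)ᶜ) (hS : ∀ i ∉ S, ∀ t ∈ Icc (0 : ℝ) 1, γ t ∉ B i) :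
    ∃ γ' : ℝ → X, ContinuousOn γ' (Icc 0 1) ∧ γ' 0 = γ 0 ∧ γ' 1 = γ 1 ∧
      (∀ t ∈ Icc (0 : ℝ) 1, γ' t ∈ (⋃ i, B i)ᶜ) ∧ pathLength γ' ≤ pathLength γ + S.card * ε := by
  classical
  induction S using Finset.induction_on generalizing γ with
  | empty =>
    refine ⟨γ, hγ, rfl, rfl, fun t ht => ?_, le_self_add⟩
    simpa using fun i => hS i (Finset.notMem_empty i) t ht
  | insert i S hi ih =>
    have hBi : ∀ z ∈ (⋃ j, B j)ᶜ, z ∉ B i := fun z hz hzi => hz (mem_iUnion_of_mem i hzi)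
    obtain ⟨γ₂, hγ₂, h0₂, h1₂, hγ₂R, hlen₂⟩ :=
      hγ.exists_reroute_around (hB i) (hBi _ h0) (hBi _ h1) (hfr i)
    have hγ₂S : ∀ j ∉ S, ∀ t ∈ Icc (0 : ℝ) 1, γ₂ t ∉ B j := by
      intro j hj t ht htj
      obtain hR | ⟨⟨t', ht', heq⟩, hU⟩ := hγ₂R ht
      · exact hR (mem_iUnion_of_mem j htj)
      · obtain rfl | hji := eq_or_ne j i
        · exact hU htj
        · exact hS j (by simp [hji, hj]) t' ht' (heq ▸ htj)
    obtain ⟨γ', hγ', h0', h1', hγ'R, hlen'⟩ := ih hγ₂ (h0₂ ▸ h0) (h1₂ ▸ h1) hγ₂S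
    refine ⟨γ', hγ', h0'.trans h0₂, h1'.trans h1₂, hγ'R, ?_⟩
    calc pathLength γ' ≤ pathLength γ₂ + S.card * ε := hlen'
      _ ≤ pathLength γ + ε + S.card * ε := by gcongr
      _ = pathLength γ + (insert i S).card * ε := by
        rw [Finset.card_insert_of_notMem hi]; push_cast; ring

end Reroute

theorem reroute_path_around_disks_general
    {X : Type*} [MetricSpace X]
    (n : ℕ)
    (B : Fin n → Set X) (hBopen : ∀ i, IsOpen (B i))
    (R : Set X) (hR : R = (⋃ i, B i)ᶜ)
    (δ : ℝ) (hδ : 0 < δ)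
    (x y : X) (hx : x ∈ R) (hy : y ∈ R)
    (ha : ∃ γ : ℝ → X, ContinuousOn γ (Set.Icc 0 1) ∧ γ 0 = x ∧ γ 1 = y ∧
      pathLength γ ≤ ENNReal.ofReal (dist x y + δ))
    (hb : ∀ i, ∀ p ∈ frontier (B i), ∀ q ∈ frontier (B i),
      ∃ γ : ℝ → X, ContinuousOn γ (Set.Icc 0 1) ∧ γ 0 = p ∧ γ 1 = q ∧
        (∀ t ∈ Set.Icc (0 : ℝ) 1, γ t ∈ R) ∧ pathLength γ ≤ ENNReal.ofReal δ) :
    ∃ γ : ℝ → X, ContinuousOn γ (Set.Icc 0 1) ∧ γ 0 = x ∧ γ 1 = y ∧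
      (∀ t ∈ Set.Icc (0 : ℝ) 1, γ t ∈ R) ∧
      pathLength γ ≤ ENNReal.ofReal (dist x y + (n + 1) * δ) := by
  subst hR
  obtain ⟨γ, hγ, rfl, rfl, hlen⟩ := ha
  obtain ⟨γ', hγ', h0, h1, hγ'R, hlen'⟩ :=
    hγ.exists_path_avoiding_iUnion hBopen hb Finset.univ hx hy (by simp)
  refine ⟨γ', hγ', h0, h1, hγ'R, hlen'.trans ?_⟩
  calc pathLength γ + (Finset.univ : Finset (Fin n)).card * ENNReal.ofReal δ
      ≤ ENNReal.ofReal (dist (γ 0) (γ 1) + δ) + ENNReal.ofReal (n * δ) := by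
        rw [Finset.card_univ, Fintype.card_fin, ENNReal.ofReal_mul (Nat.cast_nonneg n),
          ENNReal.ofReal_natCast]
        gcongr
    _ = ENNReal.ofReal (dist (γ 0) (γ 1) + (n + 1) * δ) := by
        rw [← ENNReal.ofReal_add (by positivity) (by positivity)]
        congr 1
        ring

/-- **Rerouting paths around small disks.** Let `X` be a metric space, `B_1, …, B_n`
pairwise disjoint open subsets, `R = X ∖ (B_1 ∪ … ∪ B_n)`, `δ > 0`, and `x, y ∈ R`.
If (a) `x` and `y` are joined in `X` by a continuous path of length at most `d(x,y) + δ`,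
and (b) any two points of each frontier `∂B_i` are joined by a continuous path in `R`
of length at most `δ`, then `x` and `y` are joined by a continuous path in `R` of
length at most `d(x,y) + (n+1)δ`. -/
theorem reroute_path_around_disks
    {X : Type*} [MetricSpace X]
    (n : ℕ) (hn : 1 ≤ n)
    (B : Fin n → Set X) (hBopen : ∀ i, IsOpen (B i))
    (hBdisj : Pairwise fun i j => Disjoint (B i) (B j))
    (R : Set X) (hR : R = (⋃ i, B i)ᶜ)
    (δ : ℝ) (hδ : 0 < δ)
    (x y : X) (hx : x ∈ R) (hy : y ∈ R)
    (ha : ∃ γ : ℝ → X, ContinuousOn γ (Set.Icc 0 1) ∧ γ 0 = x ∧ γ 1 = y ∧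
      pathLength γ ≤ ENNReal.ofReal (dist x y + δ))
    (hb : ∀ i, ∀ p ∈ frontier (B i), ∀ q ∈ frontier (B i),
      ∃ γ : ℝ → X, ContinuousOn γ (Set.Icc 0 1) ∧ γ 0 = p ∧ γ 1 = q ∧
        (∀ t ∈ Set.Icc (0 : ℝ) 1, γ t ∈ R) ∧ pathLength γ ≤ ENNReal.ofReal δ) :
    ∃ γ : ℝ → X, ContinuousOn γ (Set.Icc 0 1) ∧ γ 0 = x ∧ γ 1 = y ∧
      (∀ t ∈ Set.Icc (0 : ℝ) 1, γ t ∈ R) ∧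
      pathLength γ ≤ ENNReal.ofReal (dist x y + (n + 1) * δ) :=
  reroute_path_around_disks_general n B hBopen R hR δ hδ x y hx hy ha hb
end

section
/- Let (X,d) be a compact metric space and let μ be a Borel measure on X with 0 < μ(X) < ∞ satisfying the relative volume comparison: for every p ∈ X and all radii 0 < r_1 ≤ r_2 one has μ(B(p,r_1))·r_2² ≥ μ(B(p,r_2))·r_1², where B(p,r) denotes the open ball of radius r around p. Let R ⊆ X be a nonempty closed subset whose diameter is at most 2, and let ε > 0. If μ(X ∖ R) < (ε/(2ε+2))²·μ(X), then every point of X lies at distance at most ε from R. -/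
open MeasureTheory Metric

set_option maxHeartbeats 1000000 in
/-- **ε-density from volume comparison.** Let `(X,d)` be a compact metric space and `μ`
a Borel measure with `0 < μ(X) < ∞` satisfying the relative volume comparison
`μ(B(p,r₁))·r₂² ≥ μ(B(p,r₂))·r₁²` for `0 < r₁ ≤ r₂`. Let `R ⊆ X` be a nonempty closed
subset of diameter at most `2`, and `ε > 0`. If `μ(X ∖ R) < (ε/(2ε+2))²·μ(X)`, then
every point of `X` lies at distance at most `ε` from `R`. -/
theorem dense_of_small_complement_volume
    {X : Type*} [MetricSpace X] [CompactSpace X]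
    [MeasurableSpace X] [BorelSpace X]
    (μ : Measure X) (hμ0 : 0 < μ Set.univ) (hμfin : μ Set.univ < ⊤)
    (hcomp : ∀ (p : X) (r₁ r₂ : ℝ), 0 < r₁ → r₁ ≤ r₂ →
      μ (ball p r₂) * ENNReal.ofReal (r₁ ^ 2) ≤ μ (ball p r₁) * ENNReal.ofReal (r₂ ^ 2))
    (R : Set X) (hRne : R.Nonempty) (hRclosed : IsClosed R)
    (hRdiam : Metric.diam R ≤ 2)
    (ε : ℝ) (hε : 0 < ε)
    (hsmall : μ (Set.univ \ R) < ENNReal.ofReal ((ε / (2 * ε + 2)) ^ 2) * μ Set.univ) :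
    ∀ x : X, Metric.infDist x R ≤ ε := by
  by_contra h
  push_neg at h
  obtain ⟨x, hx⟩ := h
  set t : ℝ := Metric.infDist x R with ht
  have htpos : 0 < t := lt_trans hε hx
  have hRcpt : IsCompact R := hRclosed.isCompact
  obtain ⟨q₀, hq₀R, hq₀⟩ := hRcpt.exists_infDist_eq_dist hRne x
  set S : ℝ := t + 2 + ε with hS
  have hSpos : 0 < S := by positivity
  -- ball x t ⊆ univ \ R
  have hball_sub : ball x t ⊆ Set.univ \ R := by
    intro y hy
    refine ⟨trivial, fun hyR => ?_⟩
    have : t ≤ dist x y := Metric.infDist_le_dist_of_mem hyR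
    exact absurd (mem_ball'.mp hy) (not_lt.mpr this)
  -- R ⊆ ball x S
  have hR_sub : R ⊆ ball x S := by
    intro q hq
    have h1 : dist x q ≤ dist x q₀ + dist q₀ q := dist_triangle x q₀ q
    have h2 : dist q₀ q ≤ Metric.diam R := dist_le_diam_of_mem hRcpt.isBounded hq₀R hq
    have h3 : dist x q₀ = t := hq₀.symm
    exact mem_ball'.mpr (by rw [hS]; linarith)
  -- measurability / finiteness facts
  have hRmeas : MeasurableSet R := hRclosed.measurableSet
  have hfin : ∀ s : Set X, μ s < ⊤ := fun s =>
    lt_of_le_of_lt (measure_mono (Set.subset_univ s)) hμfin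
  -- union decomposition
  have hsplit : μ R + μ (Set.univ \ R) = μ Set.univ := by
    rw [← measure_union Set.disjoint_sdiff_right (MeasurableSet.univ.diff hRmeas),
      Set.union_diff_cancel (Set.subset_univ R)]
  -- disjoint union inside big ball
  have hdisj : Disjoint R (ball x t) :=
    Set.disjoint_left.mpr fun y hyR hyb => (hball_sub hyb).2 hyR
  have hbig : μ R + μ (ball x t) ≤ μ (ball x S) := by
    rw [← measure_union hdisj measurableSet_ball]
    exact measure_mono (Set.union_subset hR_sub (ball_subset_ball (by rw [hS]; linarith)))
  -- comparison
  have hcompx := hcomp x t S htpos (by rw [hS]; linarith)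
  -- convert to reals
  set a : ℝ := (μ R).toReal with ha
  set c : ℝ := (μ (Set.univ \ R)).toReal with hc
  set b1 : ℝ := (μ (ball x t)).toReal with hb1
  set b2 : ℝ := (μ (ball x S)).toReal with hb2
  have ha0 : 0 ≤ a := ENNReal.toReal_nonneg
  have hc0 : 0 ≤ c := ENNReal.toReal_nonneg
  have hb10 : 0 ≤ b1 := ENNReal.toReal_nonneg
  have hT : (μ Set.univ).toReal = a + c := by
    rw [← hsplit, ENNReal.toReal_add (hfin _).ne (hfin _).ne]
  -- real versions of the inequalities
  have hb1c : b1 ≤ c :=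
    (ENNReal.toReal_le_toReal (hfin _).ne (hfin _).ne).mpr (measure_mono hball_sub)
  have hab : a + b1 ≤ b2 := by
    have h1 := (ENNReal.toReal_le_toReal
        (ENNReal.add_lt_top.mpr ⟨hfin _, hfin _⟩).ne (hfin (ball x S)).ne).mpr hbig
    rwa [ENNReal.toReal_add (hfin _).ne (hfin _).ne] at h1
  have hcompR : b2 * t ^ 2 ≤ b1 * S ^ 2 := by
    have h1 := (ENNReal.toReal_le_toReal
      (ENNReal.mul_lt_top (hfin _) ENNReal.ofReal_lt_top).ne
      (ENNReal.mul_lt_top (hfin _) ENNReal.ofReal_lt_top).ne).mpr hcompx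
    rwa [ENNReal.toReal_mul, ENNReal.toReal_mul, ENNReal.toReal_ofReal (by positivity),
      ENNReal.toReal_ofReal (by positivity)] at h1
  have hsmallR : c * (2 * ε + 2) ^ 2 < ε ^ 2 * (a + c) := by
    have h1 := (ENNReal.toReal_lt_toReal (hfin _).ne
      (ENNReal.mul_lt_top ENNReal.ofReal_lt_top hμfin).ne).mpr hsmall
    rw [ENNReal.toReal_mul, ENNReal.toReal_ofReal (by positivity), hT, div_pow] at h1
    have hD2 : (0:ℝ) < (2 * ε + 2) ^ 2 := by positivity
    have h2 := mul_lt_mul_of_pos_right h1 hD2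
    have h3 : ε ^ 2 / (2 * ε + 2) ^ 2 * (a + c) * (2 * ε + 2) ^ 2 = ε ^ 2 * (a + c) := by
      field_simp
    linarith [h2, h3.le, h3.ge]
  -- key elementary inequality: t·(2ε+2) > ε·S, hence squared
  have hkey : ε * S < t * (2 * ε + 2) := by
    rw [hS]; nlinarith [mul_pos hε (sub_pos.mpr hx)]
  have hkey2 : ε ^ 2 * S ^ 2 < t ^ 2 * (2 * ε + 2) ^ 2 := by
    have h0 : 0 ≤ ε * S := by positivity
    have := mul_self_lt_mul_self h0 hkey
    nlinarith [this]
  -- derive the contradiction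
  have hDε : ε ^ 2 < (2 * ε + 2) ^ 2 := by nlinarith
  have hc1 : c * ((2 * ε + 2) ^ 2 - ε ^ 2) < ε ^ 2 * a := by nlinarith [hsmallR]
  have hb1' : b1 * ((2 * ε + 2) ^ 2 - ε ^ 2) < ε ^ 2 * a :=
    lt_of_le_of_lt (mul_le_mul_of_nonneg_right hb1c (by linarith)) hc1
  have hSt : t ^ 2 < S ^ 2 := by nlinarith
  have hstep : (a + b1) * t ^ 2 ≤ b2 * t ^ 2 :=
    mul_le_mul_of_nonneg_right hab (sq_nonneg t)
  have h1' : a * t ^ 2 ≤ b1 * (S ^ 2 - t ^ 2) := by linarith [hstep, hcompR]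
  have hfinal1 : a * t ^ 2 * ((2 * ε + 2) ^ 2 - ε ^ 2)
      ≤ b1 * (S ^ 2 - t ^ 2) * ((2 * ε + 2) ^ 2 - ε ^ 2) :=
    mul_le_mul_of_nonneg_right h1' (by linarith)
  have hfinal2 : b1 * ((2 * ε + 2) ^ 2 - ε ^ 2) * (S ^ 2 - t ^ 2)
      < ε ^ 2 * a * (S ^ 2 - t ^ 2) :=
    mul_lt_mul_of_pos_right hb1' (by linarith)
  nlinarith [hfinal1, hfinal2, hkey2, ha0, mul_nonneg ha0 (le_of_lt (sub_pos.mpr hkey2))]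
end

section
/- Let C > 0 and let u : ℝ² → ℝ be a measurable function with u(x) ≥ 0 for all x and u(x) ≤ −(5/6)·log|x| + C for all x with 0 < |x| < 3. Let h : ℝ² → ℝ be measurable with 0 ≤ h ≤ 1, vanishing outside the closed unit ball, and with H := ∫_{ℝ²} h dy ≥ (10/11)·π. For 0 < t < 1 define the mollification u_t(x) = (1/(t²·H)) ∫_{ℝ²} h(y/t)·u(x−y) dy. Then there exists a constant C' > 0, depending only on C, such that u_t(x) ≤ −(11/12)·log|x| + C' for all 0 < t < 1 and all x with 0 < |x| < 2. -/
/-!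
Write `ψ(z) = log⁺ (1/|z|)`. The hypothesis gives `u ≤ C + (5/6) ψ` on the balls `B(x, t)`,
`h(·/t) ≤ 1` vanishes off `B(0, t)`, and `π t² / (t² H) ≤ 11/10`, so it suffices to show that the
mean of `ψ` over `B(x, t)` is at most `1/2 + log (2/|x|)`. If `t ≤ |x|/2`, then `ψ ≤ log (2/|x|)` on
`B(x, t)`. Otherwise, as `ψ` is radially decreasing, its integral over `B(x, t)` is at most its
integral over `B(0, t)`, which equals `π t² (1/2 - log t)`, and `-log t < log (2/|x|)`.
Since `(11/10)·(5/6) = 11/12`, the constant in front of `log |x|` comes out exactly.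
-/

open MeasureTheory Metric Set Real

theorem posLog_inv_eq_neg_log {y : ℝ} (hy0 : 0 ≤ y) (hy1 : y ≤ 1) : log⁺ y⁻¹ = -log y := by
  rw [posLog_apply, log_inv, max_eq_right (neg_nonneg.2 (log_nonpos hy0 hy1))]

theorem neg_log_le_posLog_inv (y : ℝ) : -log y ≤ log⁺ y⁻¹ := by
  rw [← log_inv]
  exact le_max_right _ _

theorem integral_negMulLog {t : ℝ} (ht : 0 ≤ t) :
    ∫ r in (0)..t, negMulLog r = t ^ 2 / 4 - t ^ 2 / 2 * log t := by
  have hF : ∀ r, r ^ 2 / 4 - r ^ 2 / 2 * log r = r ^ 2 / 4 + r / 2 * negMulLog r := by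
    intro r; rw [negMulLog]; ring
  rw [hF, intervalIntegral.integral_eq_sub_of_hasDerivAt_of_le
    (f := fun r => r ^ 2 / 4 + r / 2 * negMulLog r) ht (by fun_prop) (fun r hr => ?_)
    (continuous_negMulLog.intervalIntegrable 0 t)]
  · simp
  · refine (((hasDerivAt_pow 2 r).div_const 4).add
      (((hasDerivAt_id r).div_const 2).mul (hasDerivAt_negMulLog hr.1.ne'))).congr_deriv ?_
    simp only [negMulLog, id]; ring

section AddHaar

variable {E : Type*} [NormedAddCommGroup E] [NormedSpace ℝ E] [FiniteDimensional ℝ E]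
  [MeasurableSpace E] [BorelSpace E] (μ : Measure E) [μ.IsAddHaarMeasure]

theorem setIntegral_closedBall_le_setIntegral_closedBall_zero {f : E → ℝ} (x : E) {t m : ℝ}
    (hf : LocallyIntegrable f μ) (h_out : ∀ z, t < ‖z‖ → f z ≤ m)
    (h_in : ∀ᵐ z ∂μ, ‖z‖ ≤ t → m ≤ f z) :
    ∫ z in closedBall x t, f z ∂μ ≤ ∫ z in closedBall 0 t, f z ∂μ := by
  set A := closedBall x t
  set B := closedBall (0 : E) t
  have hA : IntegrableOn f A μ := hf.integrableOn_isCompact (isCompact_closedBall x t)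
  have hB : IntegrableOn f B μ := hf.integrableOn_isCompact (isCompact_closedBall 0 t)
  have h_vol : μ.real (A \ B) = μ.real (B \ A) := by
    have hAB := measureReal_sdiff_add_inter (μ := μ) (s := A) (t := B) measurableSet_closedBall
      measure_closedBall_lt_top.ne
    have hBA := measureReal_sdiff_add_inter (μ := μ) (s := B) (t := A) measurableSet_closedBall
      measure_closedBall_lt_top.ne
    rw [inter_comm, Measure.addHaar_real_closedBall_center μ x t] at hAB
    linarith
  have h_AB : ∫ z in A \ B, f z ∂μ ≤ μ.real (A \ B) * m := by
    rw [← smul_eq_mul, ← setIntegral_const]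
    refine setIntegral_mono_on (hA.mono_set sdiff_subset) (integrableOn_const ?_)
      (measurableSet_closedBall.diff measurableSet_closedBall) fun z hz => h_out z ?_
    · exact measure_ne_top_of_subset sdiff_subset (measure_closedBall_lt_top).ne
    · simpa [B] using hz.2
  have h_BA : μ.real (B \ A) * m ≤ ∫ z in B \ A, f z ∂μ := by
    rw [← smul_eq_mul, ← setIntegral_const]
    refine setIntegral_mono_on_ae (integrableOn_const ?_) (hB.mono_set sdiff_subset)
      (measurableSet_closedBall.diff measurableSet_closedBall) ?_
    · exact measure_ne_top_of_subset sdiff_subset (measure_closedBall_lt_top).ne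
    · filter_upwards [h_in] with z hz hzB
      exact hz (by simpa [B] using hzB.1)
  have h_splitA := integral_inter_add_sdiff measurableSet_closedBall hA (t := B)
  have h_splitB := integral_inter_add_sdiff measurableSet_closedBall hB (t := A)
  rw [inter_comm] at h_splitB
  rw [h_vol] at h_AB
  linarith

theorem integral_mul_comp_sub_le_setIntegral_closedBall {h u g : E → ℝ} {x : E} {t : ℝ}
    (ht : 0 < t) (hh_nonneg : ∀ y, 0 ≤ h y) (hh_le : ∀ y, h y ≤ 1)
    (hh_supp : ∀ y, 1 < ‖y‖ → h y = 0) (hu_nonneg : ∀ z, 0 ≤ u z)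
    (hug : ∀ᵐ z ∂μ, z ∈ closedBall x t → u z ≤ g z) (hg : IntegrableOn g (closedBall x t) μ) :
    ∫ y, h (t⁻¹ • y) * u (x - y) ∂μ ≤ ∫ z in closedBall x t, g z ∂μ := by
  rw [← integral_indicator measurableSet_closedBall,
    ← integral_sub_left_eq_self ((closedBall x t).indicator g) μ x]
  refine integral_mono_of_nonneg (.of_forall fun y => mul_nonneg (hh_nonneg _) (hu_nonneg _))
    ((hg.integrable_indicator measurableSet_closedBall).comp_sub_left x) ?_
  filter_upwards [(Measure.measurePreserving_sub_left μ x).quasiMeasurePreserving.ae hug] with y hy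
  by_cases hyt : ‖y‖ ≤ t
  · have hmem : x - y ∈ closedBall x t := by simpa [dist_eq_norm] using hyt
    rw [indicator_of_mem hmem]
    exact (mul_le_of_le_one_left (hu_nonneg _) (hh_le _)).trans (hy hmem)
  · have hmem : x - y ∉ closedBall x t := by simpa [dist_eq_norm] using hyt
    have hsupp : h (t⁻¹ • y) = 0 := by
      refine hh_supp _ ?_
      rw [norm_smul, norm_inv, norm_of_nonneg ht.le, lt_inv_mul_iff₀ ht, mul_one]
      exact lt_of_not_ge hyt
    rw [indicator_of_notMem hmem, hsupp, zero_mul]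

theorem integrable_posLog_norm_inv [Nontrivial E] : Integrable (fun z : E => log⁺ ‖z‖⁻¹) μ := by
  rw [integrable_fun_norm_addHaar μ (f := fun r => log⁺ r⁻¹), ← Ioc_union_Ioi_eq_Ioi zero_le_one]
  refine IntegrableOn.union ?_ (integrableOn_zero.congr_fun (fun y (hy : 1 < y) => ?_)
    measurableSet_Ioi)
  · have h_log : IntegrableOn log (Ioc 0 1) :=
      (intervalIntegrable_iff_integrableOn_Ioc_of_le zero_le_one).1
        intervalIntegral.intervalIntegrable_log'
    refine h_log.norm.mono' (by fun_prop) ((ae_restrict_iff' measurableSet_Ioc).2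
      (.of_forall fun y ⟨hy0, hy1⟩ => ?_))
    have h_pow : y ^ (Module.finrank ℝ E - 1) ≤ 1 := pow_le_one₀ hy0.le hy1
    rw [posLog_inv_eq_neg_log hy0.le hy1, norm_smul, norm_neg]
    exact mul_le_of_le_one_left (norm_nonneg _) (by simpa [abs_of_pos hy0] using h_pow)
  · rw [posLog_apply, log_inv, max_eq_left (neg_nonpos.2 (log_nonneg hy.le)), smul_zero]

end AddHaar

theorem setIntegral_closedBall_zero_posLog_norm_inv {t : ℝ} (ht : 0 < t) (ht1 : t ≤ 1) :
    ∫ z in closedBall (0 : EuclideanSpace ℝ (Fin 2)) t, log⁺ ‖z‖⁻¹ =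
      π * t ^ 2 * (1 / 2 - log t) := by
  have h_radial : ∀ r ∈ Ioi (0 : ℝ), r ^ (2 - 1) • (Iic t).indicator (fun r => log⁺ r⁻¹) r =
      (Iic t).indicator negMulLog r := by
    intro r hr
    by_cases hrt : r ≤ t
    · simp [indicator_of_mem (mem_Iic.2 hrt), posLog_inv_eq_neg_log hr.le (hrt.trans ht1),
        negMulLog]
    · simp [indicator_of_notMem (show r ∉ Iic t from hrt)]
  rw [← integral_indicator measurableSet_closedBall]
  calc ∫ z, (closedBall (0 : EuclideanSpace ℝ (Fin 2)) t).indicator (fun z => log⁺ ‖z‖⁻¹) z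
      = ∫ z : EuclideanSpace ℝ (Fin 2), (Iic t).indicator (fun r => log⁺ r⁻¹) ‖z‖ := by
        refine integral_congr_ae (.of_forall fun z => ?_)
        by_cases hz : ‖z‖ ≤ t <;> simp [indicator, hz]
    _ = 2 * π * ∫ r in (0)..t, negMulLog r := by
        rw [integral_fun_norm_addHaar, finrank_euclideanSpace_fin,
          setIntegral_congr_fun measurableSet_Ioi h_radial, setIntegral_indicator measurableSet_Iic,
          Ioi_inter_Iic, ← intervalIntegral.integral_of_le ht.le]
        simp [measureReal_def, ENNReal.toReal_ofReal pi_pos.le, mul_assoc]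
    _ = π * t ^ 2 * (1 / 2 - log t) := by
        rw [integral_negMulLog ht.le]; ring

theorem measureReal_closedBall_fin_two (x : EuclideanSpace ℝ (Fin 2)) {t : ℝ} (ht : 0 ≤ t) :
    volume.real (closedBall x t) = π * t ^ 2 := by
  rw [measureReal_def, EuclideanSpace.volume_closedBall_fin_two, ENNReal.toReal_mul,
    ENNReal.toReal_pow, ENNReal.toReal_ofReal ht, ENNReal.toReal_ofReal pi_pos.le, mul_comm]

theorem setIntegral_closedBall_posLog_norm_inv_le {x : EuclideanSpace ℝ (Fin 2)} (hx : x ≠ 0)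
    {t : ℝ} (ht : 0 < t) (ht1 : t ≤ 1) :
    ∫ z in closedBall x t, log⁺ ‖z‖⁻¹ ≤ π * t ^ 2 * (1 / 2 + log⁺ (2 / ‖x‖)) := by
  have hψ := integrable_posLog_norm_inv (volume : Measure (EuclideanSpace ℝ (Fin 2)))
  rcases le_or_gt (2 * t) ‖x‖ with h_far | h_near
  · calc ∫ z in closedBall x t, log⁺ ‖z‖⁻¹ ≤ ∫ _ in closedBall x t, log⁺ (2 / ‖x‖) := by
          refine setIntegral_mono_on hψ.integrableOn
            (integrableOn_const measure_closedBall_lt_top.ne) measurableSet_closedBall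
            fun z hz => posLog_le_posLog (inv_nonneg.2 (norm_nonneg _)) ?_
          rw [mem_closedBall, dist_eq_norm] at hz
          rw [← inv_div]
          exact inv_anti₀ (by positivity) (by linarith [norm_sub_norm_le x z, norm_sub_rev x z])
      _ = π * t ^ 2 * log⁺ (2 / ‖x‖) := by
          rw [setIntegral_const, measureReal_closedBall_fin_two x ht.le, smul_eq_mul]
      _ ≤ π * t ^ 2 * (1 / 2 + log⁺ (2 / ‖x‖)) := by
          gcongr; linarith
  · have h_out : ∀ z : EuclideanSpace ℝ (Fin 2), t < ‖z‖ → log⁺ ‖z‖⁻¹ ≤ log⁺ t⁻¹ :=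
      fun z hz => posLog_le_posLog (inv_nonneg.2 (norm_nonneg _)) (inv_anti₀ ht hz.le)
    have h_in : ∀ᵐ z : EuclideanSpace ℝ (Fin 2), ‖z‖ ≤ t → log⁺ t⁻¹ ≤ log⁺ ‖z‖⁻¹ := by
      filter_upwards [volume.ae_ne 0] with z hz0 hz
      exact posLog_le_posLog (inv_nonneg.2 ht.le) (inv_anti₀ (norm_pos_iff.2 hz0) hz)
    have h_log : -log t ≤ log⁺ (2 / ‖x‖) := by
      refine (neg_log_le_posLog_inv t).trans (posLog_le_posLog (inv_nonneg.2 ht.le) ?_)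
      rw [← inv_div]
      exact inv_anti₀ (by positivity) (by linarith)
    calc ∫ z in closedBall x t, log⁺ ‖z‖⁻¹ ≤ ∫ z in closedBall 0 t, log⁺ ‖z‖⁻¹ :=
          setIntegral_closedBall_le_setIntegral_closedBall_zero volume x hψ.locallyIntegrable
            h_out h_in
      _ = π * t ^ 2 * (1 / 2 - log t) := setIntegral_closedBall_zero_posLog_norm_inv ht ht1
      _ ≤ π * t ^ 2 * (1 / 2 + log⁺ (2 / ‖x‖)) := by
          gcongr; linarith

theorem setIntegral_closedBall_const_add_posLog_norm_inv_le (c : ℝ) {a : ℝ} (ha : 0 ≤ a)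
    {x : EuclideanSpace ℝ (Fin 2)} (hx : x ≠ 0) {t : ℝ} (ht : 0 < t) (ht1 : t ≤ 1) :
    ∫ z in closedBall x t, (c + a * log⁺ ‖z‖⁻¹) ≤
      π * t ^ 2 * (c + a * (1 / 2 + log⁺ (2 / ‖x‖))) := by
  have hψ := integrable_posLog_norm_inv (volume : Measure (EuclideanSpace ℝ (Fin 2)))
  rw [integral_add (integrableOn_const (C := c) measure_closedBall_lt_top.ne)
    (hψ.const_mul _).integrableOn, integral_const_mul, setIntegral_const,
    measureReal_closedBall_fin_two x ht.le, smul_eq_mul]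
  linear_combination a * setIntegral_closedBall_posLog_norm_inv_le hx ht ht1

/-- **Mollification estimate near a log singularity.** Let `C > 0`. There is a constant
`C' > 0`, depending only on `C`, such that for any measurable `u : ℝ² → ℝ` with `u ≥ 0`
and `u(x) ≤ -(5/6)·log|x| + C` for `0 < |x| < 3`, and any measurable bump `h : ℝ² → ℝ`
with `0 ≤ h ≤ 1`, vanishing outside the closed unit ball, and total mass
`H = ∫ h ≥ (10/11)·π`, the mollification `u_t(x) = (1/(t²H)) ∫ h(y/t) u(x−y) dy`
satisfies `u_t(x) ≤ -(11/12)·log|x| + C'` for all `0 < t < 1` and `0 < |x| < 2`. -/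
theorem mollification_log_estimate (C : ℝ) (hC : 0 < C) :
    ∃ C' : ℝ, 0 < C' ∧
      ∀ u h : EuclideanSpace ℝ (Fin 2) → ℝ,
        Measurable u →
        (∀ x, 0 ≤ u x) →
        (∀ x, 0 < ‖x‖ → ‖x‖ < 3 → u x ≤ -(5 / 6) * Real.log ‖x‖ + C) →
        Measurable h →
        (∀ x, 0 ≤ h x) → (∀ x, h x ≤ 1) →
        (∀ x, 1 < ‖x‖ → h x = 0) →
        (10 / 11) * Real.pi ≤ ∫ y, h y →
        ∀ t : ℝ, 0 < t → t < 1 →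
          ∀ x : EuclideanSpace ℝ (Fin 2), 0 < ‖x‖ → ‖x‖ < 2 →
            (1 / (t ^ 2 * ∫ y, h y)) * (∫ y, h (t⁻¹ • y) * u (x - y))
              ≤ -(11 / 12) * Real.log ‖x‖ + C' := by
  refine ⟨2 * C + 2, by linarith, ?_⟩
  intro u h _ hu_nonneg hu_le _ hh_nonneg hh_le hh_supp hH t ht ht1 x hx hx2
  have hH_pos : 0 < ∫ y, h y := lt_of_lt_of_le (by positivity) hH
  have hu_le_posLog : ∀ᵐ z, z ∈ closedBall x t → u z ≤ C + 5 / 6 * log⁺ ‖z‖⁻¹ := by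
    filter_upwards [volume.ae_ne 0] with z hz0 hz
    rw [mem_closedBall, dist_eq_norm] at hz
    linarith [hu_le z (norm_pos_iff.2 hz0) (by linarith [norm_le_norm_add_norm_sub' z x]),
      neg_log_le_posLog_inv ‖z‖]
  have h_int : IntegrableOn (fun z => C + 5 / 6 * log⁺ ‖z‖⁻¹) (closedBall x t) :=
    (integrableOn_const measure_closedBall_lt_top.ne).add
      ((integrable_posLog_norm_inv volume).const_mul _).integrableOn
  set K := C + 5 / 6 * (1 / 2 + log⁺ (2 / ‖x‖)) with hK_def
  have h_mass : ∫ y, h (t⁻¹ • y) * u (x - y) ≤ π * t ^ 2 * K :=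
    (integral_mul_comp_sub_le_setIntegral_closedBall volume ht hh_nonneg hh_le hh_supp hu_nonneg
      hu_le_posLog h_int).trans
      (setIntegral_closedBall_const_add_posLog_norm_inv_le C (by norm_num) (norm_pos_iff.1 hx)
        ht ht1.le)
  have hK : 0 ≤ K := by have := posLog_nonneg (x := 2 / ‖x‖); positivity
  have h_log : log⁺ (2 / ‖x‖) = log 2 - log ‖x‖ := by
    rw [posLog_eq_log (by rw [abs_of_pos (by positivity)]; exact (one_le_div hx).2 hx2.le),
      log_div two_ne_zero hx.ne']
  calc 1 / (t ^ 2 * ∫ y, h y) * ∫ y, h (t⁻¹ • y) * u (x - y)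
      ≤ 1 / (t ^ 2 * ∫ y, h y) * (π * t ^ 2 * K) := by gcongr
    _ = π / (∫ y, h y) * K := by field_simp
    _ ≤ 11 / 10 * K := mul_le_mul_of_nonneg_right ((div_le_iff₀ hH_pos).2 (by linarith)) hK
    _ ≤ -(11 / 12) * log ‖x‖ + (2 * C + 2) := by linarith [log_two_lt_d9]
end

section
/- Let r > 0 and let D = {x ∈ ℝ³ : x₁² + x₂² < r²}. Let a₁₂, a₁₃, a₂₃ : D → ℝ be C¹ functions satisfying the closedness relation ∂₁a₂₃ − ∂₂a₁₃ + ∂₃a₁₂ = 0 on D (i.e. the 2-form α = a₁₂ dx₁∧dx₂ + a₁₃ dx₁∧dx₃ + a₂₃ dx₂∧dx₃ is closed). Define β₁, β₂, β₃ : D → ℝ by β₁(x) = −x₂·∫₀¹ t·a₁₂(t x₁, t x₂, x₃) dt, β₂(x) = x₁·∫₀¹ t·a₁₂(t x₁, t x₂, x₃) dt, and β₃(x) = ∫₀¹ ( x₁·a₁₃(t x₁, t x₂, x₃) + x₂·a₂₃(t x₁, t x₂, x₃) ) dt. Then on D one has ∂₁β₂ − ∂₂β₁ = a₁₂, ∂₁β₃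 − ∂₃β₁ = a₁₃, and ∂₂β₃ − ∂₃β₂ = a₂₃ (i.e. dβ = α for the 1-form β = β₁dx₁ + β₂dx₂ + β₃dx₃). Moreover, if |a₁₂|, |a₁₃|, |a₂₃| ≤ M on D for some M ≥ 0, then |β_i(x)| ≤ 2rM for all x ∈ D and i = 1, 2, 3. -/
/-- Partial derivative of `f : ℝ³ → ℝ` in the first coordinate. -/
noncomputable def pd₁ (f : ℝ × ℝ × ℝ → ℝ) (x : ℝ × ℝ × ℝ) : ℝ :=
  fderiv ℝ f x (1, 0, 0)

/-- Partial derivative of `f : ℝ³ → ℝ` in the second coordinate. -/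
noncomputable def pd₂ (f : ℝ × ℝ × ℝ → ℝ) (x : ℝ × ℝ × ℝ) : ℝ :=
  fderiv ℝ f x (0, 1, 0)

/-- Partial derivative of `f : ℝ³ → ℝ` in the third coordinate. -/
noncomputable def pd₃ (f : ℝ × ℝ × ℝ → ℝ) (x : ℝ × ℝ × ℝ) : ℝ :=
  fderiv ℝ f x (0, 0, 1)

/-!
`β = ∫₀¹ hₜ^* (ι_{∂ₜhₜ} α) dt` is the homotopy operator of Cartan's formula for the contraction
`hₜ(x₁, x₂, x₃) = (t x₁, t x₂, x₃)` of the cylinder onto its axis. Differentiating under the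
integral sign, each component of `dβ` becomes `∫₀¹ d/dt (tᵏ aᵢⱼ(hₜ x)) dt = aᵢⱼ(x)` (`k = 2` for
`a₁₂`, `k = 1` otherwise), closedness being used to trade `∂₁a₂₃ + ∂₃a₁₂` for `∂₂a₁₃`. Since
`|t| ≤ 1` and `|x₁|, |x₂| < r` on the cylinder, each `βᵢ` is bounded by `2rM`.
-/

open Set Metric MeasureTheory
open scoped Interval

noncomputable def homotopyIntegral {E : Type*} [NormedAddCommGroup E] [NormedSpace ℝ E]
    (A : ℝ → E →L[ℝ] E) (w : ℝ → ℝ) (g : E → ℝ) (x : E) : ℝ :=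
  ∫ t in (0 : ℝ)..1, w t * g (A t x)

theorem ContDiffOn.continuousOn_fderiv_apply {E F : Type*} [NormedAddCommGroup E]
    [NormedSpace ℝ E] [NormedAddCommGroup F] [NormedSpace ℝ F] {g : E → F} {D : Set E}
    (hg : ContDiffOn ℝ 1 g D) (hD : IsOpen D) (v : E) :
    ContinuousOn (fun z => fderiv ℝ g z v) D :=
  (hg.continuousOn_fderiv_of_isOpen hD le_rfl).clm_apply continuousOn_const

theorem ContinuousOn.intervalIntegrable_prodMk_left {X F : Type*} [TopologicalSpace X]
    [NormedAddCommGroup F] {D : Set X} {f : ℝ × X → F} (hf : ContinuousOn f (Icc 0 1 ×ˢ D))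
    {x : X} (hx : x ∈ D) :
    IntervalIntegrable (fun t => f (t, x)) volume 0 1 :=
  (hf.comp (Continuous.prodMk_left x).continuousOn fun _ ht => ⟨ht, hx⟩).intervalIntegrable_of_Icc
    zero_le_one

section HomotopyIntegral

variable {E : Type*} [NormedAddCommGroup E] [NormedSpace ℝ E] {A : ℝ → E →L[ℝ] E} {D : Set E}

theorem abs_homotopyIntegral_le (hAD : ∀ t ∈ Icc (0 : ℝ) 1, MapsTo (A t) D D) {w : ℝ → ℝ}
    (hw : ∀ t ∈ Icc (0 : ℝ) 1, |w t| ≤ 1) {g : E → ℝ} {M : ℝ} (hgM : ∀ z ∈ D, |g z| ≤ M)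
    {x : E} (hx : x ∈ D) :
    |homotopyIntegral A w g x| ≤ M := by
  have h := intervalIntegral.norm_integral_le_of_norm_le_const (a := 0) (b := 1) (C := M)
    (f := fun t => w t * g (A t x)) fun t ht => by
      rw [uIoc_of_le zero_le_one] at ht
      have ht' := Ioc_subset_Icc_self ht
      rw [Real.norm_eq_abs, abs_mul, ← one_mul M]
      exact mul_le_mul (hw t ht') (hgM _ (hAD t ht' hx)) (abs_nonneg _) zero_le_one
  rw [homotopyIntegral]
  simpa using h

variable (hA : Continuous A) (hAD : ∀ t ∈ Icc (0 : ℝ) 1, MapsTo (A t) D D)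
include hA hAD

theorem continuousOn_comp_homotopy {F : Type*} [TopologicalSpace F] {g : E → F}
    (hg : ContinuousOn g D) :
    ContinuousOn (fun p : ℝ × E => g (A p.1 p.2)) (Icc 0 1 ×ˢ D) :=
  hg.comp ((hA.comp continuous_fst).clm_apply continuous_snd).continuousOn
    fun p hp => hAD p.1 hp.1 hp.2

theorem continuousOn_fderiv_comp_homotopy (hD : IsOpen D) {w : ℝ → ℝ} (hw : Continuous w)
    {g : E → ℝ} (hg : ContDiffOn ℝ 1 g D) :
    ContinuousOn (fun p : ℝ × E => w p.1 • (fderiv ℝ g (A p.1 p.2)).comp (A p.1))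
      (Icc 0 1 ×ˢ D) :=
  (hw.comp continuous_fst).continuousOn.smul
    ((continuousOn_comp_homotopy hA hAD (hg.continuousOn_fderiv_of_isOpen hD le_rfl)).clm_comp
      (hA.comp continuous_fst).continuousOn)

theorem intervalIntegrable_mul_comp_homotopy {w : ℝ → ℝ} (hw : Continuous w)
    {g : E → ℝ} (hg : ContinuousOn g D) {x : E} (hx : x ∈ D) :
    IntervalIntegrable (fun t => w t * g (A t x)) volume 0 1 :=
  ((hw.comp continuous_fst).continuousOn.mul
    (continuousOn_comp_homotopy hA hAD hg)).intervalIntegrable_prodMk_left hx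

theorem hasFDerivAt_homotopyIntegral [ProperSpace E] (hD : IsOpen D) {w : ℝ → ℝ}
    (hw : Continuous w) {g : E → ℝ} (hg : ContDiffOn ℝ 1 g D) {x : E} (hx : x ∈ D) :
    HasFDerivAt (homotopyIntegral A w g)
      (∫ t in (0 : ℝ)..1, w t • (fderiv ℝ g (A t x)).comp (A t)) x := by
  obtain ⟨δ, hδ, hball⟩ := nhds_basis_closedBall.mem_iff.1 (hD.mem_nhds hx)
  have hF' := continuousOn_fderiv_comp_homotopy hA hAD hD hw hg
  -- the derivatives of the integrand are uniformly bounded on the compact set `[0, 1] × B̄(x, δ)`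
  obtain ⟨C, hC⟩ := (isCompact_Icc.prod (isCompact_closedBall x δ)).exists_bound_of_continuousOn
    (hF'.mono (prod_mono subset_rfl hball))
  have hIoc : ∀ t ∈ Ι (0 : ℝ) 1, t ∈ Icc (0 : ℝ) 1 := fun t ht =>
    Ioc_subset_Icc_self (by rwa [uIoc_of_le zero_le_one] at ht)
  refine intervalIntegral.hasFDerivAt_integral_of_dominated_of_fderiv_le
    (F' := fun y t => w t • (fderiv ℝ g (A t y)).comp (A t)) (bound := fun _ => C)
    (closedBall_mem_nhds x hδ) ?_
    (intervalIntegrable_mul_comp_homotopy hA hAD hw hg.continuousOn hx)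
    (hF'.intervalIntegrable_prodMk_left hx).def'.aestronglyMeasurable ?_ intervalIntegrable_const ?_
  · filter_upwards [hD.mem_nhds hx] with y hy
    exact (intervalIntegrable_mul_comp_homotopy hA hAD hw hg.continuousOn
      hy).def'.aestronglyMeasurable
  · exact Filter.Eventually.of_forall fun t ht y hy => hC (t, y) ⟨hIoc t ht, hy⟩
  · refine Filter.Eventually.of_forall fun t ht y hy => ?_
    have hgd := (hg.differentiableOn one_ne_zero).differentiableAt
      (hD.mem_nhds (hAD t (hIoc t ht) (hball hy)))
    exact (hgd.hasFDerivAt.comp y (A t).hasFDerivAt).const_mul (w t)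

theorem fderiv_homotopyIntegral_apply [ProperSpace E] (hD : IsOpen D) {w : ℝ → ℝ}
    (hw : Continuous w) {g : E → ℝ} (hg : ContDiffOn ℝ 1 g D) {x : E} (hx : x ∈ D) (v : E) :
    fderiv ℝ (homotopyIntegral A w g) x v =
      ∫ t in (0 : ℝ)..1, w t * fderiv ℝ g (A t x) (A t v) := by
  rw [(hasFDerivAt_homotopyIntegral hA hAD hD hw hg hx).fderiv,
    ContinuousLinearMap.intervalIntegral_apply
      ((continuousOn_fderiv_comp_homotopy hA hAD hD hw hg).intervalIntegrable_prodMk_left hx)]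
  rfl

theorem homotopyIntegral_add_of_eqOn {w : ℝ → ℝ} (hw : Continuous w)
    {f g h : E → ℝ} (hf : ContinuousOn f D) (hg : ContinuousOn g D)
    (hfgh : ∀ z ∈ D, f z + g z = h z) {x : E} (hx : x ∈ D) :
    homotopyIntegral A w f x + homotopyIntegral A w g x = homotopyIntegral A w h x := by
  rw [homotopyIntegral, homotopyIntegral, ← intervalIntegral.integral_add
    (intervalIntegrable_mul_comp_homotopy hA hAD hw hf hx)
    (intervalIntegrable_mul_comp_homotopy hA hAD hw hg hx)]
  refine intervalIntegral.integral_congr fun t ht => ?_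
  rw [uIcc_of_le zero_le_one] at ht
  simp only [← mul_add, hfgh _ (hAD t ht hx)]

end HomotopyIntegral

noncomputable def cylinderScale (t : ℝ) : (ℝ × ℝ × ℝ) →L[ℝ] ℝ × ℝ × ℝ :=
  (t • ContinuousLinearMap.id ℝ ℝ).prodMap
    ((t • ContinuousLinearMap.id ℝ ℝ).prodMap (ContinuousLinearMap.id ℝ ℝ))

@[simp] theorem cylinderScale_apply (t : ℝ) (x : ℝ × ℝ × ℝ) :
    cylinderScale t x = (t * x.1, t * x.2.1, x.2.2) := rfl

theorem continuous_cylinderScale : Continuous cylinderScale :=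
  continuous_clm_apply.2 fun v => by simp only [cylinderScale_apply]; fun_prop

theorem hasDerivAt_cylinderScale_apply (x : ℝ × ℝ × ℝ) (t : ℝ) :
    HasDerivAt (fun s => cylinderScale s x) (x.1, x.2.1, 0) t := by
  simpa using ((hasDerivAt_mul_const x.1).prodMk ((hasDerivAt_mul_const x.2.1).prodMk
    (hasDerivAt_const t x.2.2)))

theorem fderiv_fst_mul_apply {F : Type*} [NormedAddCommGroup F] [NormedSpace ℝ F]
    {f : ℝ × F → ℝ} {x : ℝ × F} (hf : DifferentiableAt ℝ f x) (v : ℝ × F) :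
    fderiv ℝ (fun y => y.1 * f y) x v = v.1 * f x + x.1 * fderiv ℝ f x v := by
  have hprod : HasFDerivAt (fun y => y.1 * f y) _ x := hasFDerivAt_fst.mul hf.hasFDerivAt
  rw [hprod.fderiv]
  simp
  ring

theorem fderiv_snd_fst_mul_apply {F G : Type*} [NormedAddCommGroup F] [NormedSpace ℝ F]
    [NormedAddCommGroup G] [NormedSpace ℝ G]
    {f : F × ℝ × G → ℝ} {x : F × ℝ × G} (hf : DifferentiableAt ℝ f x) (v : F × ℝ × G) :
    fderiv ℝ (fun y => y.2.1 * f y) x v = v.2.1 * f x + x.2.1 * fderiv ℝ f x v := by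
  have hprod : HasFDerivAt (fun y => y.2.1 * f y) _ x :=
    (hasFDerivAt_fst.comp x hasFDerivAt_snd).mul hf.hasFDerivAt
  rw [hprod.fderiv]
  simp
  ring

section Cylinder

variable {D : Set (ℝ × ℝ × ℝ)} (hD : IsOpen D)
  (hstar : ∀ t ∈ Icc (0 : ℝ) 1, MapsTo (cylinderScale t) D D)
include hD hstar

theorem differentiableAt_homotopyIntegral_cylinderScale (k : ℕ) {g : ℝ × ℝ × ℝ → ℝ}
    (hg : ContDiffOn ℝ 1 g D) {x : ℝ × ℝ × ℝ} (hx : x ∈ D) :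
    DifferentiableAt ℝ (homotopyIntegral cylinderScale (· ^ k) g) x :=
  (hasFDerivAt_homotopyIntegral continuous_cylinderScale hstar hD (continuous_pow k) hg
    hx).differentiableAt

theorem pd₁_homotopyIntegral (k : ℕ) {g : ℝ × ℝ × ℝ → ℝ} (hg : ContDiffOn ℝ 1 g D)
    {x : ℝ × ℝ × ℝ} (hx : x ∈ D) :
    pd₁ (homotopyIntegral cylinderScale (· ^ k) g) x =
      homotopyIntegral cylinderScale (· ^ (k + 1)) (pd₁ g) x := by
  rw [pd₁,
    fderiv_homotopyIntegral_apply continuous_cylinderScale hstar hD (continuous_pow k) hg hx]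
  refine intervalIntegral.integral_congr fun t _ => ?_
  simp only [pd₁, show cylinderScale t (1, 0, 0) = t • (1, 0, 0) by simp, map_smul, smul_eq_mul]
  ring

theorem pd₂_homotopyIntegral (k : ℕ) {g : ℝ × ℝ × ℝ → ℝ} (hg : ContDiffOn ℝ 1 g D)
    {x : ℝ × ℝ × ℝ} (hx : x ∈ D) :
    pd₂ (homotopyIntegral cylinderScale (· ^ k) g) x =
      homotopyIntegral cylinderScale (· ^ (k + 1)) (pd₂ g) x := by
  rw [pd₂,
    fderiv_homotopyIntegral_apply continuous_cylinderScale hstar hD (continuous_pow k) hg hx]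
  refine intervalIntegral.integral_congr fun t _ => ?_
  simp only [pd₂, show cylinderScale t (0, 1, 0) = t • (0, 1, 0) by simp, map_smul, smul_eq_mul]
  ring

theorem pd₃_homotopyIntegral (k : ℕ) {g : ℝ × ℝ × ℝ → ℝ} (hg : ContDiffOn ℝ 1 g D)
    {x : ℝ × ℝ × ℝ} (hx : x ∈ D) :
    pd₃ (homotopyIntegral cylinderScale (· ^ k) g) x =
      homotopyIntegral cylinderScale (· ^ k) (pd₃ g) x := by
  rw [pd₃,
    fderiv_homotopyIntegral_apply continuous_cylinderScale hstar hD (continuous_pow k) hg hx]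
  refine intervalIntegral.integral_congr fun t _ => ?_
  simp [pd₃]

theorem succ_mul_homotopyIntegral_add_radial_eq (n : ℕ) {g : ℝ × ℝ × ℝ → ℝ}
    (hg : ContDiffOn ℝ 1 g D) {x : ℝ × ℝ × ℝ} (hx : x ∈ D) :
    (n + 1) * homotopyIntegral cylinderScale (· ^ n) g x
      + x.1 * homotopyIntegral cylinderScale (· ^ (n + 1)) (pd₁ g) x
      + x.2.1 * homotopyIntegral cylinderScale (· ^ (n + 1)) (pd₂ g) x = g x := by
  have hderiv : ∀ t ∈ uIcc (0 : ℝ) 1,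
      HasDerivAt (fun s => s ^ (n + 1) * g (cylinderScale s x))
        ((n + 1) * (t ^ n * g (cylinderScale t x))
          + x.1 * (t ^ (n + 1) * pd₁ g (cylinderScale t x))
          + x.2.1 * (t ^ (n + 1) * pd₂ g (cylinderScale t x))) t := by
    intro t ht
    rw [uIcc_of_le zero_le_one] at ht
    have hgd := (hg.differentiableOn one_ne_zero).differentiableAt (hD.mem_nhds (hstar t ht hx))
    have hcomp := hgd.hasFDerivAt.comp_hasDerivAt t (hasDerivAt_cylinderScale_apply x t)
    have hsplit : ((x.1, x.2.1, 0) : ℝ × ℝ × ℝ) = x.1 • (1, 0, 0) + x.2.1 • (0, 1, 0) := by simp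
    rw [hsplit, map_add, map_smul, map_smul] at hcomp
    refine ((hasDerivAt_pow (n + 1) t).mul hcomp).congr_deriv ?_
    simp only [pd₁, pd₂, Function.comp_apply, smul_eq_mul, Nat.cast_add, Nat.cast_one,
      add_tsub_cancel_right]
    ring
  have hint {w : ℝ → ℝ} (hw : Continuous w) {f : ℝ × ℝ × ℝ → ℝ} (hf : ContinuousOn f D) :=
    intervalIntegrable_mul_comp_homotopy continuous_cylinderScale hstar hw hf hx
  have h₀ := (hint (continuous_pow n) hg.continuousOn).const_mul ((n : ℝ) + 1)
  have h₁ := (hint (continuous_pow (n + 1)) (f := pd₁ g)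
    (hg.continuousOn_fderiv_apply hD _)).const_mul x.1
  have h₂ := (hint (continuous_pow (n + 1)) (f := pd₂ g)
    (hg.continuousOn_fderiv_apply hD _)).const_mul x.2.1
  have hftc := intervalIntegral.integral_eq_sub_of_hasDerivAt hderiv ((h₀.add h₁).add h₂)
  rw [intervalIntegral.integral_add (h₀.add h₁) h₂, intervalIntegral.integral_add h₀ h₁,
    intervalIntegral.integral_const_mul, intervalIntegral.integral_const_mul,
    intervalIntegral.integral_const_mul] at hftc
  simpa [homotopyIntegral] using hftc

theorem pd₁_sub_pd₂_homotopyIntegral {g : ℝ × ℝ × ℝ → ℝ} (hg : ContDiffOn ℝ 1 g D)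
    {x : ℝ × ℝ × ℝ} (hx : x ∈ D) :
    pd₁ (fun y => y.1 * homotopyIntegral cylinderScale (· ^ 1) g y) x
      - pd₂ (fun y => -(y.2.1 * homotopyIntegral cylinderScale (· ^ 1) g y)) x = g x := by
  have hH := differentiableAt_homotopyIntegral_cylinderScale hD hstar 1 hg hx
  have h₁ := pd₁_homotopyIntegral hD hstar 1 hg hx
  have h₂ := pd₂_homotopyIntegral hD hstar 1 hg hx
  have he := succ_mul_homotopyIntegral_add_radial_eq hD hstar 1 hg hx
  rw [pd₁] at h₁ ⊢
  rw [pd₂] at h₂ ⊢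
  rw [fderiv_fun_neg, neg_apply, fderiv_fst_mul_apply hH, fderiv_snd_fst_mul_apply hH, h₁, h₂]
  norm_num at he ⊢
  linarith

theorem homotopyIntegral_pd₁_add_pd₃ {a₁₂ a₁₃ a₂₃ : ℝ × ℝ × ℝ → ℝ}
    (h₁₂ : ContDiffOn ℝ 1 a₁₂ D) (h₂₃ : ContDiffOn ℝ 1 a₂₃ D)
    (hclosed : ∀ x ∈ D, pd₁ a₂₃ x - pd₂ a₁₃ x + pd₃ a₁₂ x = 0) (k : ℕ) {x : ℝ × ℝ × ℝ}
    (hx : x ∈ D) :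
    homotopyIntegral cylinderScale (· ^ k) (pd₁ a₂₃) x
      + homotopyIntegral cylinderScale (· ^ k) (pd₃ a₁₂) x
      = homotopyIntegral cylinderScale (· ^ k) (pd₂ a₁₃) x :=
  homotopyIntegral_add_of_eqOn continuous_cylinderScale hstar (continuous_pow k)
    (f := pd₁ a₂₃) (g := pd₃ a₁₂) (h₂₃.continuousOn_fderiv_apply hD _)
    (h₁₂.continuousOn_fderiv_apply hD _)
    (fun z hz => by linarith [hclosed z hz]) hx

theorem pd₁_sub_pd₃_homotopyIntegral {a₁₂ a₁₃ a₂₃ : ℝ × ℝ × ℝ → ℝ}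
    (h₁₂ : ContDiffOn ℝ 1 a₁₂ D) (h₁₃ : ContDiffOn ℝ 1 a₁₃ D) (h₂₃ : ContDiffOn ℝ 1 a₂₃ D)
    (hclosed : ∀ x ∈ D, pd₁ a₂₃ x - pd₂ a₁₃ x + pd₃ a₁₂ x = 0) {x : ℝ × ℝ × ℝ} (hx : x ∈ D) :
    pd₁ (fun y => y.1 * homotopyIntegral cylinderScale (· ^ 0) a₁₃ y
        + y.2.1 * homotopyIntegral cylinderScale (· ^ 0) a₂₃ y) x
      - pd₃ (fun y => -(y.2.1 * homotopyIntegral cylinderScale (· ^ 1) a₁₂ y)) x = a₁₃ x := by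
  have hH₁₂ := differentiableAt_homotopyIntegral_cylinderScale hD hstar 1 h₁₂ hx
  have hH₁₃ := differentiableAt_homotopyIntegral_cylinderScale hD hstar 0 h₁₃ hx
  have hH₂₃ := differentiableAt_homotopyIntegral_cylinderScale hD hstar 0 h₂₃ hx
  have e₁₃ := pd₁_homotopyIntegral hD hstar 0 h₁₃ hx
  have e₂₃ := pd₁_homotopyIntegral hD hstar 0 h₂₃ hx
  have e₁₂ := pd₃_homotopyIntegral hD hstar 1 h₁₂ hx
  have hc := homotopyIntegral_pd₁_add_pd₃ hD hstar h₁₂ h₂₃ hclosed 1 hx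
  have he := succ_mul_homotopyIntegral_add_radial_eq hD hstar 0 h₁₃ hx
  rw [pd₁] at e₁₃ e₂₃ ⊢
  rw [pd₃] at e₁₂ ⊢
  rw [fderiv_fun_add (by fun_prop) (by fun_prop), add_apply, fderiv_fst_mul_apply hH₁₃,
    fderiv_snd_fst_mul_apply hH₂₃, fderiv_fun_neg, neg_apply, fderiv_snd_fst_mul_apply hH₁₂,
    e₁₃, e₂₃, e₁₂]
  norm_num at he hc ⊢
  linear_combination he + x.2.1 * hc

theorem pd₂_sub_pd₃_homotopyIntegral {a₁₂ a₁₃ a₂₃ : ℝ × ℝ × ℝ → ℝ}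
    (h₁₂ : ContDiffOn ℝ 1 a₁₂ D) (h₁₃ : ContDiffOn ℝ 1 a₁₃ D) (h₂₃ : ContDiffOn ℝ 1 a₂₃ D)
    (hclosed : ∀ x ∈ D, pd₁ a₂₃ x - pd₂ a₁₃ x + pd₃ a₁₂ x = 0) {x : ℝ × ℝ × ℝ} (hx : x ∈ D) :
    pd₂ (fun y => y.1 * homotopyIntegral cylinderScale (· ^ 0) a₁₃ y
        + y.2.1 * homotopyIntegral cylinderScale (· ^ 0) a₂₃ y) x
      - pd₃ (fun y => y.1 * homotopyIntegral cylinderScale (· ^ 1) a₁₂ y) x = a₂₃ x := by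
  have hH₁₂ := differentiableAt_homotopyIntegral_cylinderScale hD hstar 1 h₁₂ hx
  have hH₁₃ := differentiableAt_homotopyIntegral_cylinderScale hD hstar 0 h₁₃ hx
  have hH₂₃ := differentiableAt_homotopyIntegral_cylinderScale hD hstar 0 h₂₃ hx
  have e₁₃ := pd₂_homotopyIntegral hD hstar 0 h₁₃ hx
  have e₂₃ := pd₂_homotopyIntegral hD hstar 0 h₂₃ hx
  have e₁₂ := pd₃_homotopyIntegral hD hstar 1 h₁₂ hx
  have hc := homotopyIntegral_pd₁_add_pd₃ hD hstar h₁₂ h₂₃ hclosed 1 hx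
  have he := succ_mul_homotopyIntegral_add_radial_eq hD hstar 0 h₂₃ hx
  rw [pd₂] at e₁₃ e₂₃ ⊢
  rw [pd₃] at e₁₂ ⊢
  rw [fderiv_fun_add (by fun_prop) (by fun_prop), add_apply, fderiv_fst_mul_apply hH₁₃,
    fderiv_snd_fst_mul_apply hH₂₃, fderiv_fst_mul_apply hH₁₂, e₁₃, e₂₃, e₁₂]
  norm_num at he hc ⊢
  linear_combination he - x.1 * hc

end Cylinder

theorem abs_le_of_sq_add_sq_lt {a b r : ℝ} (hr : 0 ≤ r) (h : a ^ 2 + b ^ 2 < r ^ 2) :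
    |a| ≤ r ∧ |b| ≤ r :=
  ⟨(abs_lt_of_sq_lt_sq (by nlinarith [sq_nonneg b]) hr).le,
    (abs_lt_of_sq_lt_sq (by nlinarith [sq_nonneg a]) hr).le⟩

theorem abs_mul_homotopyIntegral_cylinderScale_le {D : Set (ℝ × ℝ × ℝ)}
    (hstar : ∀ t ∈ Icc (0 : ℝ) 1, MapsTo (cylinderScale t) D D) {c r : ℝ} (hc : |c| ≤ r)
    {g : ℝ × ℝ × ℝ → ℝ} {M : ℝ} (hgM : ∀ z ∈ D, |g z| ≤ M) {x : ℝ × ℝ × ℝ} (hx : x ∈ D) (k : ℕ) :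
    |c * homotopyIntegral cylinderScale (· ^ k) g x| ≤ r * M := by
  have hH := abs_homotopyIntegral_le hstar (w := (· ^ k)) (fun t ht => by
    rw [abs_pow, abs_of_nonneg ht.1]; exact pow_le_one₀ ht.1 ht.2) hgM hx
  rw [abs_mul]
  exact mul_le_mul hc hH (abs_nonneg _) ((abs_nonneg c).trans hc)

theorem integral_fst_mul_add_snd_mul_comp_cylinderScale {D : Set (ℝ × ℝ × ℝ)}
    (hstar : ∀ t ∈ Icc (0 : ℝ) 1, MapsTo (cylinderScale t) D D) {f g : ℝ × ℝ × ℝ → ℝ}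
    (hf : ContinuousOn f D) (hg : ContinuousOn g D) {x : ℝ × ℝ × ℝ} (hx : x ∈ D) :
    ∫ t in (0 : ℝ)..1,
        (x.1 * f (t * x.1, t * x.2.1, x.2.2) + x.2.1 * g (t * x.1, t * x.2.1, x.2.2))
      = x.1 * homotopyIntegral cylinderScale (· ^ 0) f x
        + x.2.1 * homotopyIntegral cylinderScale (· ^ 0) g x := by
  have hsplit := intervalIntegral.integral_add
    ((intervalIntegrable_mul_comp_homotopy continuous_cylinderScale hstar (continuous_pow 0) hf
      hx).const_mul x.1)
    ((intervalIntegrable_mul_comp_homotopy continuous_cylinderScale hstar (continuous_pow 0) hg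
      hx).const_mul x.2.1)
  simp only [intervalIntegral.integral_const_mul] at hsplit
  simpa [homotopyIntegral] using hsplit

theorem mapsTo_cylinderScale {r t : ℝ} (ht : t ∈ Icc (0 : ℝ) 1) :
    MapsTo (cylinderScale t) {x : ℝ × ℝ × ℝ | x.1 ^ 2 + x.2.1 ^ 2 < r ^ 2}
      {x | x.1 ^ 2 + x.2.1 ^ 2 < r ^ 2} := by
  intro x (hx : x.1 ^ 2 + x.2.1 ^ 2 < r ^ 2)
  show (t * x.1) ^ 2 + (t * x.2.1) ^ 2 < r ^ 2
  have ht2 : t ^ 2 ≤ 1 := pow_le_one₀ ht.1 ht.2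
  nlinarith [sq_nonneg x.1, sq_nonneg x.2.1]

theorem abs_homotopy_primitive_le {r M : ℝ} (hr : 0 < r) (hM : 0 ≤ M)
    {a₁₂ a₁₃ a₂₃ : ℝ × ℝ × ℝ → ℝ}
    (hbound : ∀ x ∈ {x : ℝ × ℝ × ℝ | x.1 ^ 2 + x.2.1 ^ 2 < r ^ 2},
      |a₁₂ x| ≤ M ∧ |a₁₃ x| ≤ M ∧ |a₂₃ x| ≤ M)
    {x : ℝ × ℝ × ℝ} (hx : x ∈ {x : ℝ × ℝ × ℝ | x.1 ^ 2 + x.2.1 ^ 2 < r ^ 2}) :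
    |-(x.2.1 * homotopyIntegral cylinderScale (· ^ 1) a₁₂ x)| ≤ 2 * r * M ∧
      |x.1 * homotopyIntegral cylinderScale (· ^ 1) a₁₂ x| ≤ 2 * r * M ∧
      |x.1 * homotopyIntegral cylinderScale (· ^ 0) a₁₃ x
        + x.2.1 * homotopyIntegral cylinderScale (· ^ 0) a₂₃ x| ≤ 2 * r * M := by
  have hstar := fun t (ht : t ∈ Icc (0 : ℝ) 1) => mapsTo_cylinderScale (r := r) ht
  obtain ⟨hx₁, hx₂⟩ := abs_le_of_sq_add_sq_lt hr.le hx
  have hrM : r * M ≤ 2 * r * M := by nlinarith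
  have b₁ := abs_mul_homotopyIntegral_cylinderScale_le hstar hx₂ (fun z hz => (hbound z hz).1) hx 1
  have b₂ := abs_mul_homotopyIntegral_cylinderScale_le hstar hx₁ (fun z hz => (hbound z hz).1) hx 1
  have b₁₃ :=
    abs_mul_homotopyIntegral_cylinderScale_le hstar hx₁ (fun z hz => (hbound z hz).2.1) hx 0
  have b₂₃ :=
    abs_mul_homotopyIntegral_cylinderScale_le hstar hx₂ (fun z hz => (hbound z hz).2.2) hx 0
  rw [abs_neg]
  exact ⟨b₁.trans hrM, b₂.trans hrM, (abs_add_le _ _).trans (by linarith)⟩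

/-- **Homotopy operator on a solid cylinder.** Let `D = {x ∈ ℝ³ : x₁² + x₂² < r²}` and
let `α = a₁₂ dx₁∧dx₂ + a₁₃ dx₁∧dx₃ + a₂₃ dx₂∧dx₃` be a closed `C¹` 2-form on `D`.
Then the explicitly defined 1-form `β = β₁dx₁ + β₂dx₂ + β₃dx₃` satisfies `dβ = α` on `D`,
and if `|a₁₂|, |a₁₃|, |a₂₃| ≤ M` on `D` then `|βᵢ| ≤ 2rM` on `D`. -/
theorem homotopy_operator_cylinder
    (r : ℝ) (hr : 0 < r)
    (a₁₂ a₁₃ a₂₃ : ℝ × ℝ × ℝ → ℝ)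
    (h₁₂ : ContDiffOn ℝ 1 a₁₂ {x : ℝ × ℝ × ℝ | x.1 ^ 2 + x.2.1 ^ 2 < r ^ 2})
    (h₁₃ : ContDiffOn ℝ 1 a₁₃ {x : ℝ × ℝ × ℝ | x.1 ^ 2 + x.2.1 ^ 2 < r ^ 2})
    (h₂₃ : ContDiffOn ℝ 1 a₂₃ {x : ℝ × ℝ × ℝ | x.1 ^ 2 + x.2.1 ^ 2 < r ^ 2})
    (hclosed : ∀ x ∈ {x : ℝ × ℝ × ℝ | x.1 ^ 2 + x.2.1 ^ 2 < r ^ 2},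
      pd₁ a₂₃ x - pd₂ a₁₃ x + pd₃ a₁₂ x = 0)
    (β₁ β₂ β₃ : ℝ × ℝ × ℝ → ℝ)
    (hβ₁ : ∀ x : ℝ × ℝ × ℝ,
      β₁ x = -x.2.1 * ∫ t in (0 : ℝ)..1, t * a₁₂ (t * x.1, t * x.2.1, x.2.2))
    (hβ₂ : ∀ x : ℝ × ℝ × ℝ,
      β₂ x = x.1 * ∫ t in (0 : ℝ)..1, t * a₁₂ (t * x.1, t * x.2.1, x.2.2))
    (hβ₃ : ∀ x : ℝ × ℝ × ℝ,
      β₃ x = ∫ t in (0 : ℝ)..1,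
        (x.1 * a₁₃ (t * x.1, t * x.2.1, x.2.2) + x.2.1 * a₂₃ (t * x.1, t * x.2.1, x.2.2))) :
    (∀ x ∈ {x : ℝ × ℝ × ℝ | x.1 ^ 2 + x.2.1 ^ 2 < r ^ 2},
        pd₁ β₂ x - pd₂ β₁ x = a₁₂ x ∧
        pd₁ β₃ x - pd₃ β₁ x = a₁₃ x ∧
        pd₂ β₃ x - pd₃ β₂ x = a₂₃ x) ∧
    (∀ M : ℝ, 0 ≤ M →
      (∀ x ∈ {x : ℝ × ℝ × ℝ | x.1 ^ 2 + x.2.1 ^ 2 < r ^ 2},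
        |a₁₂ x| ≤ M ∧ |a₁₃ x| ≤ M ∧ |a₂₃ x| ≤ M) →
      (∀ x ∈ {x : ℝ × ℝ × ℝ | x.1 ^ 2 + x.2.1 ^ 2 < r ^ 2},
        |β₁ x| ≤ 2 * r * M ∧ |β₂ x| ≤ 2 * r * M ∧ |β₃ x| ≤ 2 * r * M)) := by
  set D := {x : ℝ × ℝ × ℝ | x.1 ^ 2 + x.2.1 ^ 2 < r ^ 2}
  have hD : IsOpen D := isOpen_lt (by fun_prop) continuous_const
  have hstar : ∀ t ∈ Icc (0 : ℝ) 1, MapsTo (cylinderScale t) D D := fun t => mapsTo_cylinderScale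
  set H := fun (k : ℕ) (g : ℝ × ℝ × ℝ → ℝ) => homotopyIntegral cylinderScale (· ^ k) g
  have e₁ : β₁ = fun y => -(y.2.1 * H 1 a₁₂ y) := by
    funext y; simp [H, hβ₁, homotopyIntegral]
  have e₂ : β₂ = fun y => y.1 * H 1 a₁₂ y := by
    funext y; simp [H, hβ₂, homotopyIntegral]
  have e₃ : ∀ y ∈ D, β₃ y = y.1 * H 0 a₁₃ y + y.2.1 * H 0 a₂₃ y := fun y hy =>
    (hβ₃ y).trans (integral_fst_mul_add_snd_mul_comp_cylinderScale hstar h₁₃.continuousOn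
      h₂₃.continuousOn hy)
  have e₃' : ∀ x ∈ D, fderiv ℝ β₃ x = fderiv ℝ (fun y => y.1 * H 0 a₁₃ y + y.2.1 * H 0 a₂₃ y) x :=
    fun x hx => Filter.EventuallyEq.fderiv_eq (Filter.eventually_of_mem (hD.mem_nhds hx) e₃)
  refine ⟨fun x hx => ⟨?_, ?_, ?_⟩, fun M hM hbound x hx => ?_⟩
  · rw [e₁, e₂]
    exact pd₁_sub_pd₂_homotopyIntegral hD hstar h₁₂ hx
  · rw [pd₁, e₃' x hx, ← pd₁, e₁]
    exact pd₁_sub_pd₃_homotopyIntegral hD hstar h₁₂ h₁₃ h₂₃ hclosed hx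
  · rw [pd₂, e₃' x hx, ← pd₂, e₂]
    exact pd₂_sub_pd₃_homotopyIntegral hD hstar h₁₂ h₁₃ h₂₃ hclosed hx
  · rw [e₁, e₂, e₃ x hx]
    exact abs_homotopy_primitive_le hr hM hbound hx
end
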